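/- arXiv:2302.02965 — 4 statements merged into one kernel-verified Lean document; each statement's English description precedes it below -/
import Mathlib

section
/- (Filippov-type existence for sampled-data control) Fix a partition 𝕋 of [0,T] and consider minimizing C(x,u) = ∫_0^T L(x(s),u(s),s) ds over x ∈ AC([0,T],ℝ^n), u piecewise constant on 𝕋 with values in U, ẋ = f(x,u,t) a.e., x(0) = x_0, x(T) = x_T. If the admissible set A_𝕋 is nonempty, U is compact, and there exists R > 0 with ‖x‖_C ≤ R for all admissible pairs, then the problem has at least one solution — with no convexity assumption on the velocity sets. -/
/-!
Direct method. Along a minimizing sequence the control values at the `N + 1` nodes of the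
partition lie in the compact set `U ^ (N + 1)`, so a subsequence of the piecewise constant
controls converges pointwise on `[0, T]`: the control space is finite-dimensional, which is what
replaces the convexity of the velocity sets in Filippov's theorem. Since `f` is bounded on the
compact set `‖x‖ ≤ R, u ∈ U, s ∈ [0, T]`, the trajectories are uniformly bounded and
equi-Lipschitz, and Arzelà–Ascoli gives a further subsequence along which they converge.
Dominated convergence then passes to the limit both in the integral form of the dynamics and in
the cost, so the limit pair is admissible and attains the infimum of the cost.
-/

open MeasureTheory Set Filter Topology
open scoped NNReal BoundedContinuousFunction Interval

theorem exists_isMinOn_of_subseq_tendsto {α : Type*} {A : Set α} {J : α → ℝ} (hA : A.Nonempty)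
    (h : ∀ a : ℕ → α, (∀ k, a k ∈ A) →
      ∃ b ∈ A, ∃ φ : ℕ → ℕ, StrictMono φ ∧ Tendsto (fun k => J (a (φ k))) atTop (𝓝 (J b))) :
    ∃ b ∈ A, IsMinOn J A b := by
  have hbdd : BddBelow (J '' A) := by
    by_contra hunb
    have hseq : ∀ k : ℕ, ∃ a ∈ A, J a < -k := fun k => by
      obtain ⟨_, ⟨a, ha, rfl⟩, hlt⟩ := not_bddBelow_iff.1 hunb (-k)
      exact ⟨a, ha, hlt⟩
    choose a ha hJa using hseq
    obtain ⟨b, -, φ, hφ, hlim⟩ := h a ha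
    refine not_tendsto_atBot_of_tendsto_nhds hlim (tendsto_atBot_mono (fun k => (hJa (φ k)).le) ?_)
    exact tendsto_neg_atTop_atBot.comp (tendsto_natCast_atTop_atTop.comp hφ.tendsto_atTop)
  obtain ⟨y, -, hy, hyA⟩ := exists_seq_tendsto_sInf (hA.image J) hbdd
  choose a ha hJa using hyA
  obtain ⟨b, hb, φ, hφ, hlim⟩ := h a ha
  have hJb : J b = sInf (J '' A) :=
    tendsto_nhds_unique hlim ((hy.comp hφ.tendsto_atTop).congr fun k => (hJa (φ k)).symm)
  exact ⟨b, hb, fun c hc => hJb ▸ csInf_le hbdd (mem_image_of_mem J hc)⟩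

theorem exists_mem_Ico_of_mem_Ico {α : Type*} [LinearOrder α] {t : ℕ → α} {s : α} :
    ∀ {N : ℕ}, s ∈ Ico (t 0) (t N) → ∃ i < N, s ∈ Ico (t i) (t (i + 1))
  | 0, hs => absurd hs.2 (not_lt.2 hs.1)
  | N + 1, hs => by
    by_cases h : s < t N
    · obtain ⟨i, hi, his⟩ := exists_mem_Ico_of_mem_Ico ⟨hs.1, h⟩
      exact ⟨i, by omega, his⟩
    · exact ⟨N, N.lt_succ_self, not_lt.1 h, hs.2⟩

theorem mem_Icc_of_le_succ {α : Type*} [Preorder α] {t : ℕ → α} {N i : ℕ}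
    (ht : ∀ j < N, t j ≤ t (j + 1)) (hi : i ≤ N) : t i ∈ Icc (t 0) (t N) := by
  have hmono : Monotone fun j : Fin (N + 1) => t j :=
    Fin.monotone_iff_le_succ.2 fun j => ht j j.2
  exact ⟨hmono (Fin.zero_le (⟨i, by omega⟩ : Fin (N + 1))),
    hmono (Fin.le_last (⟨i, by omega⟩ : Fin (N + 1)))⟩

def PiecewiseConstOn {F : Type*} (t : ℕ → ℝ) (N : ℕ) (u : ℝ → F) : Prop :=
  ∀ i < N, ∀ s ∈ Ico (t i) (t (i + 1)), u s = u (t i)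

namespace PiecewiseConstOn

variable {F : Type*} {t : ℕ → ℝ} {N : ℕ}

theorem aestronglyMeasurable [TopologicalSpace F] [TopologicalSpace.PseudoMetrizableSpace F]
    {u : ℝ → F} {μ : Measure ℝ} [NullSingletonClass μ] (hu : PiecewiseConstOn t N u) :
    AEStronglyMeasurable u (μ.restrict (Icc (t 0) (t N))) := by
  rw [Measure.restrict_congr_set Ico_ae_eq_Icc.symm]
  have hcover : Ico (t 0) (t N) ⊆ ⋃ i : Fin N, Ico (t i) (t (i + 1)) := fun s hs => by
    obtain ⟨i, hi, his⟩ := exists_mem_Ico_of_mem_Ico hs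
    exact mem_iUnion.2 ⟨⟨i, hi⟩, his⟩
  refine AEStronglyMeasurable.mono_set hcover (aestronglyMeasurable_iUnion_iff.2 fun i => ?_)
  exact aestronglyMeasurable_const.congr
    ((ae_restrict_mem measurableSet_Ico).mono fun s hs => (hu i i.2 s hs).symm)

theorem exists_strictMono_tendsto [PseudoMetricSpace F] {U : Set F} (hU : IsCompact U)
    {u : ℕ → ℝ → F} (hu : ∀ k, PiecewiseConstOn t N (u k)) (huU : ∀ k, ∀ i ≤ N, u k (t i) ∈ U) :
    ∃ φ : ℕ → ℕ, StrictMono φ ∧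
      ∀ s ∈ Icc (t 0) (t N), ∃ y, Tendsto (fun k => u (φ k) s) atTop (𝓝 y) := by
  obtain ⟨c, -, φ, hφ, hc⟩ := (isCompact_univ_pi fun _ : Fin (N + 1) => hU).tendsto_subseq
    (x := fun k (i : Fin (N + 1)) => u k (t i)) fun k => mem_univ_pi.2 fun i => huU k i (by omega)
  refine ⟨φ, hφ, fun s hs => ?_⟩
  obtain ⟨i, hi, hsi⟩ : ∃ i ≤ N, ∀ k, u k s = u k (t i) := by
    rcases hs.2.lt_or_eq with hsN | rfl
    · obtain ⟨i, hi, his⟩ := exists_mem_Ico_of_mem_Ico ⟨hs.1, hsN⟩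
      exact ⟨i, hi.le, fun k => hu k i hi s his⟩
    · exact ⟨N, le_rfl, fun k => rfl⟩
  exact ⟨c ⟨i, by omega⟩, (tendsto_pi_nhds.1 hc ⟨i, by omega⟩).congr fun k => (hsi (φ k)).symm⟩

theorem of_tendsto [TopologicalSpace F] [T2Space F] (ht : ∀ i < N, t i ≤ t (i + 1))
    {u : ℕ → ℝ → F} {v : ℝ → F} (hu : ∀ k, PiecewiseConstOn t N (u k))
    (hlim : ∀ s ∈ Icc (t 0) (t N), Tendsto (fun k => u k s) atTop (𝓝 (v s))) :
    PiecewiseConstOn t N v := by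
  intro i hi s hs
  have hti := mem_Icc_of_le_succ ht hi.le
  have hs' : s ∈ Icc (t 0) (t N) :=
    ⟨hti.1.trans hs.1, hs.2.le.trans (mem_Icc_of_le_succ ht hi).2⟩
  exact tendsto_nhds_unique (hlim s hs') ((hlim (t i) hti).congr fun k => (hu k i hi s hs).symm)

end PiecewiseConstOn

theorem lipschitzOnWith_of_eq_add_integral {E : Type*} [NormedAddCommGroup E] [NormedSpace ℝ E]
    {x g : ℝ → E} {x0 : E} {a b : ℝ} {M : ℝ≥0} (hg : IntegrableOn g (Icc a b))
    (hgM : ∀ s ∈ Icc a b, ‖g s‖ ≤ M) (hx : ∀ τ ∈ Icc a b, x τ = x0 + ∫ s in a..τ, g s) :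
    LipschitzOnWith M x (Icc a b) := by
  have hint : ∀ c ∈ Icc a b, IntervalIntegrable g volume a c := fun c hc =>
    (hg.mono_set (uIcc_subset_Icc (left_mem_Icc.2 (hc.1.trans hc.2)) hc)).intervalIntegrable
  refine LipschitzOnWith.of_dist_le_mul fun σ hσ τ hτ => ?_
  rw [dist_eq_norm, hx σ hσ, hx τ hτ, add_sub_add_left_eq_sub,
    intervalIntegral.integral_interval_sub_left (hint σ hσ) (hint τ hτ), Real.dist_eq]
  exact intervalIntegral.norm_integral_le_of_norm_le_const fun s hs =>
    hgM s (uIcc_subset_Icc hτ hσ (uIoc_subset_uIcc hs))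

theorem exists_strictMono_tendsto_of_lipschitzOnWith {E : Type*} [MetricSpace E] {K : Set E}
    (hK : IsCompact K) {a b : ℝ} {M : ℝ≥0} {x : ℕ → ℝ → E} (hxK : ∀ k, ∀ s ∈ Icc a b, x k s ∈ K)
    (hx : ∀ k, LipschitzOnWith M (x k) (Icc a b)) :
    ∃ φ : ℕ → ℕ, StrictMono φ ∧ ∀ s ∈ Icc a b, ∃ y, Tendsto (fun k => x (φ k) s) atTop (𝓝 y) := by
  have : CompactSpace (Icc a b) := isCompact_iff_compactSpace.1 isCompact_Icc
  let X : ℕ → Icc a b →ᵇ E := fun k =>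
    .mkOfCompact ⟨(Icc a b).domRestrict (x k), (hx k).continuousOn.domRestrict⟩
  have hequi : Equicontinuous ((↑) : range X → Icc a b → E) := by
    refine (LipschitzWith.uniformEquicontinuous _ M ?_).equicontinuous
    rintro ⟨_, k, rfl⟩
    exact (hx k).to_restrict
  obtain ⟨Z, -, φ, hφ, hZ⟩ := (BoundedContinuousFunction.arzela_ascoli K hK (range X)
    (by rintro _ s ⟨k, rfl⟩; exact hxK k s s.2) hequi).tendsto_subseq
    fun k => subset_closure (mem_range_self k)
  exact ⟨φ, hφ, fun s hs =>
    ⟨Z ⟨s, hs⟩, ((continuous_eval_const _).tendsto Z).comp hZ⟩⟩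

section DominatedConvergence

variable {X G : Type*} [TopologicalSpace X] [NormedAddCommGroup G] {g : X → G} {K : Set X}

theorem integrableOn_comp_of_tendsto [T2Space X] {α : Type*} [MeasurableSpace α]
    {μ : Measure α} {S : Set α} {p : ℕ → α → X} {q : α → X} (hg : Continuous g)
    (hK : IsCompact K) (hS : MeasurableSet S) (hμS : μ S ≠ ⊤)
    (hmeas : ∀ k, AEStronglyMeasurable (fun a => g (p k a)) (μ.restrict S))
    (hpK : ∀ k, ∀ a ∈ S, p k a ∈ K) (hlim : ∀ a ∈ S, Tendsto (fun k => p k a) atTop (𝓝 (q a))) :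
    IntegrableOn (fun a => g (q a)) S μ := by
  obtain ⟨C, hC⟩ := hK.exists_bound_of_continuousOn hg.continuousOn
  have hqK : ∀ a ∈ S, q a ∈ K := fun a ha =>
    hK.isClosed.mem_of_tendsto (hlim a ha) (Eventually.of_forall fun k => hpK k a ha)
  refine ⟨aestronglyMeasurable_of_tendsto_ae atTop hmeas ?_, .restrict_of_bounded (C := C)
    hμS.lt_top ?_⟩
  · filter_upwards [ae_restrict_mem hS] with a ha using (hg.tendsto _).comp (hlim a ha)
  · filter_upwards [ae_restrict_mem hS] with a ha using hC _ (hqK a ha)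

theorem tendsto_intervalIntegral_comp_of_tendsto [NormedSpace ℝ G] {μ : Measure ℝ}
    [IsLocallyFiniteMeasure μ] {a b : ℝ} {p : ℕ → ℝ → X} {q : ℝ → X} (hg : Continuous g)
    (hK : IsCompact K) (hmeas : ∀ k, AEStronglyMeasurable (fun s => g (p k s)) (μ.restrict (Ι a b)))
    (hpK : ∀ k, ∀ s ∈ Ι a b, p k s ∈ K)
    (hlim : ∀ s ∈ Ι a b, Tendsto (fun k => p k s) atTop (𝓝 (q s))) :
    Tendsto (fun k => ∫ s in a..b, g (p k s) ∂μ) atTop (𝓝 (∫ s in a..b, g (q s) ∂μ)) := by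
  obtain ⟨C, hC⟩ := hK.exists_bound_of_continuousOn hg.continuousOn
  exact intervalIntegral.tendsto_integral_filter_of_dominated_convergence (fun _ => C)
    (Eventually.of_forall hmeas)
    (Eventually.of_forall fun k => ae_of_all _ fun s hs => hC _ (hpK k s hs))
    intervalIntegrable_const (ae_of_all _ fun s hs => (hg.tendsto _).comp (hlim s hs))

end DominatedConvergence

-- Membership of `(x, u)` in the admissible set `A_𝕋`, with the dynamics in integral form.
structure IsAdmissible {E F : Type*} [NormedAddCommGroup E] [NormedSpace ℝ E]
    (f : E → F → ℝ → E) (U : Set F) (T : ℝ) (N : ℕ) (t : ℕ → ℝ) (x0 xT : E)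
    (x : ℝ → E) (u : ℝ → F) : Prop where
  piecewiseConstOn : PiecewiseConstOn t N u
  mem : ∀ s ∈ Icc 0 T, u s ∈ U
  integrableOn : IntegrableOn (fun s => f (x s) (u s) s) (Icc 0 T)
  eq_add_integral : ∀ τ ∈ Icc 0 T, x τ = x0 + ∫ s in 0..τ, f (x s) (u s) s
  apply_T : x T = xT

namespace IsAdmissible

variable {E F : Type*} [NormedAddCommGroup E] [NormedSpace ℝ E]
  {f : E → F → ℝ → E} {U : Set F} {T : ℝ} {N : ℕ} {t : ℕ → ℝ} {x0 xT : E} {R : ℝ}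

theorem mem_closedBall_prod {x : ℝ → E} {u : ℝ → F} (h : IsAdmissible f U T N t x0 xT x u)
    (hR : ∀ s ∈ Icc 0 T, ‖x s‖ ≤ R) :
    ∀ s ∈ Icc 0 T, (x s, u s, s) ∈ Metric.closedBall 0 R ×ˢ U ×ˢ Icc 0 T := fun s hs =>
  ⟨mem_closedBall_zero_iff.2 (hR s hs), h.mem s hs, hs⟩

theorem aestronglyMeasurable_prodMk [MetricSpace F] {x : ℝ → E} {u : ℝ → F}
    (h : IsAdmissible f U T N t x0 xT x u) (ht0 : t 0 = 0) (htN : t N = T)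
    (hx : ContinuousOn x (Icc 0 T)) :
    AEStronglyMeasurable (fun s => (x s, u s, s)) (volume.restrict (Icc 0 T)) := by
  have hu := h.piecewiseConstOn.aestronglyMeasurable (μ := volume)
  rw [ht0, htN] at hu
  exact (hx.aestronglyMeasurable measurableSet_Icc).prodMk (hu.prodMk aestronglyMeasurable_id)

theorem of_tendsto [ProperSpace E] [MetricSpace F]
    (hf : Continuous fun q : E × F × ℝ => f q.1 q.2.1 q.2.2) (hU : IsCompact U)
    (ht : ∀ i < N, t i ≤ t (i + 1)) (ht0 : t 0 = 0) (htN : t N = T)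
    {x : ℕ → ℝ → E} {u : ℕ → ℝ → F} {y : ℝ → E} {v : ℝ → F}
    (h : ∀ k, IsAdmissible f U T N t x0 xT (x k) (u k)) (hR : ∀ k, ∀ s ∈ Icc 0 T, ‖x k s‖ ≤ R)
    (hx : ∀ s ∈ Icc 0 T, Tendsto (fun k => x k s) atTop (𝓝 (y s)))
    (hu : ∀ s ∈ Icc 0 T, Tendsto (fun k => u k s) atTop (𝓝 (v s))) :
    IsAdmissible f U T N t x0 xT y v := by
  have hK := (isCompact_closedBall (0 : E) R).prod (hU.prod (isCompact_Icc (a := 0) (b := T)))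
  have hpK := fun k => (h k).mem_closedBall_prod (hR k)
  have hlim : ∀ s ∈ Icc 0 T, Tendsto (fun k => (x k s, u k s, s)) atTop (𝓝 (y s, v s, s)) :=
    fun s hs => (hx s hs).prodMk_nhds ((hu s hs).prodMk_nhds tendsto_const_nhds)
  have hT : T ∈ Icc 0 T := by
    simpa only [ht0, htN] using mem_Icc_of_le_succ ht le_rfl
  refine ⟨PiecewiseConstOn.of_tendsto ht (fun k => (h k).piecewiseConstOn) (by rwa [ht0, htN]),
    fun s hs => hU.isClosed.mem_of_tendsto (hu s hs) (Eventually.of_forall fun k => (h k).mem s hs),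
    integrableOn_comp_of_tendsto hf hK measurableSet_Icc measure_Icc_lt_top.ne
      (fun k => (h k).integrableOn.aestronglyMeasurable) hpK hlim,
    fun τ hτ => ?_, ?_⟩
  · have hsub : Ι 0 τ ⊆ Icc 0 T := by
      rw [uIoc_of_le hτ.1]
      exact fun s hs => ⟨hs.1.le, hs.2.trans hτ.2⟩
    refine tendsto_nhds_unique (hx τ hτ) (((tendsto_intervalIntegral_comp_of_tendsto hf hK
      (fun k => (h k).integrableOn.aestronglyMeasurable.mono_set hsub)
      (fun k s hs => hpK k s (hsub hs)) fun s hs => hlim s (hsub hs)).const_add x0).congr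
      fun k => ((h k).eq_add_integral τ hτ).symm)
  · exact tendsto_nhds_unique ((hx T hT).congr fun k => (h k).apply_T) tendsto_const_nhds

theorem exists_strictMono_tendsto_cost [ProperSpace E] [MetricSpace F]
    {L : E → F → ℝ → ℝ} (hf : Continuous fun q : E × F × ℝ => f q.1 q.2.1 q.2.2)
    (hL : Continuous fun q : E × F × ℝ => L q.1 q.2.1 q.2.2) (hU : IsCompact U)
    (ht : ∀ i < N, t i ≤ t (i + 1)) (ht0 : t 0 = 0) (htN : t N = T)
    {x : ℕ → ℝ → E} {u : ℕ → ℝ → F}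
    (h : ∀ k, IsAdmissible f U T N t x0 xT (x k) (u k)) (hR : ∀ k, ∀ s ∈ Icc 0 T, ‖x k s‖ ≤ R) :
    ∃ y v, IsAdmissible f U T N t x0 xT y v ∧ ∃ φ : ℕ → ℕ, StrictMono φ ∧
      Tendsto (fun k => ∫ s in 0..T, L (x (φ k) s) (u (φ k) s) s) atTop
        (𝓝 (∫ s in 0..T, L (y s) (v s) s)) := by
  have hK := (isCompact_closedBall (0 : E) R).prod (hU.prod (isCompact_Icc (a := 0) (b := T)))
  have hpK := fun k => (h k).mem_closedBall_prod (hR k)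
  obtain ⟨C, hC⟩ := hK.exists_bound_of_continuousOn hf.continuousOn
  have hlip : ∀ k, LipschitzOnWith C.toNNReal (x k) (Icc 0 T) := fun k =>
    lipschitzOnWith_of_eq_add_integral (h k).integrableOn
      (fun s hs => (hC _ (hpK k s hs)).trans (Real.le_coe_toNNReal C)) (h k).eq_add_integral
  have huU : ∀ k, ∀ i ≤ N, u k (t i) ∈ U := fun k i hi =>
    (h k).mem _ (by simpa only [ht0, htN] using mem_Icc_of_le_succ ht hi)
  obtain ⟨φ, hφ, hu⟩ :=
    PiecewiseConstOn.exists_strictMono_tendsto hU (fun k => (h k).piecewiseConstOn) huU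
  rw [ht0, htN] at hu
  obtain ⟨ψ, hψ, hx⟩ := exists_strictMono_tendsto_of_lipschitzOnWith (isCompact_closedBall 0 R)
    (fun k s hs => mem_closedBall_zero_iff.2 (hR (φ k) s hs)) fun k => hlip (φ k)
  have : Nonempty F := ⟨u 0 0⟩
  have hy : ∀ s ∈ Icc 0 T, Tendsto (fun k => x (φ (ψ k)) s) atTop
      (𝓝 (limUnder atTop fun k => x (φ (ψ k)) s)) := fun s hs => tendsto_nhds_limUnder (hx s hs)
  have hv : ∀ s ∈ Icc 0 T, Tendsto (fun k => u (φ (ψ k)) s) atTop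
      (𝓝 (limUnder atTop fun k => u (φ (ψ k)) s)) := fun s hs =>
    tendsto_nhds_limUnder ((hu s hs).imp fun _ hw => hw.comp hψ.tendsto_atTop)
  have hT : 0 ≤ T := by simpa only [ht0, htN] using (mem_Icc_of_le_succ ht le_rfl).1
  have hsub : Ι 0 T ⊆ Icc 0 T := by
    rw [uIoc_of_le hT]
    exact Ioc_subset_Icc_self
  refine ⟨_, _, of_tendsto hf hU ht ht0 htN (fun k => h _) (fun k => hR _) hy hv, φ ∘ ψ,
    hφ.comp hψ, tendsto_intervalIntegral_comp_of_tendsto (p := fun k s => (x (φ (ψ k)) s,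
      u (φ (ψ k)) s, s)) hL hK (fun k => ?_) (fun k s hs => hpK _ s (hsub hs))
      fun s hs => (hy s (hsub hs)).prodMk_nhds ((hv s (hsub hs)).prodMk_nhds tendsto_const_nhds)⟩
  exact (hL.comp_aestronglyMeasurable ((h _).aestronglyMeasurable_prodMk ht0 htN
    (hlip _).continuousOn)).mono_set hsub

end IsAdmissible

theorem stmt_9_general (T : ℝ) (n m : ℕ)
    (x0 xT : EuclideanSpace ℝ (Fin n))
    (U : Set (EuclideanSpace ℝ (Fin m))) (hUcompact : IsCompact U)
    (f : EuclideanSpace ℝ (Fin n) → EuclideanSpace ℝ (Fin m) → ℝ → EuclideanSpace ℝ (Fin n))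
    (L : EuclideanSpace ℝ (Fin n) → EuclideanSpace ℝ (Fin m) → ℝ → ℝ)
    (hf : ContDiff ℝ 2 (fun q : EuclideanSpace ℝ (Fin n) × EuclideanSpace ℝ (Fin m) × ℝ =>
      f q.1 q.2.1 q.2.2))
    (hL : ContDiff ℝ 2 (fun q : EuclideanSpace ℝ (Fin n) × EuclideanSpace ℝ (Fin m) × ℝ =>
      L q.1 q.2.1 q.2.2))
    -- the partition 𝕋 = {t_i}
    (N : ℕ) (t : ℕ → ℝ) (ht0 : t 0 = 0) (htN : t N = T)
    (htmono : ∀ i < N, t i < t (i + 1))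
    -- the set of admissible pairs with piecewise constant control on 𝕋
    (Adm : (ℝ → EuclideanSpace ℝ (Fin n)) → (ℝ → EuclideanSpace ℝ (Fin m)) → Prop)
    (hAdm : ∀ x u, Adm x u ↔
      ((∀ i < N, ∀ s ∈ Ico (t i) (t (i + 1)), u s = u (t i)) ∧
       (∀ s ∈ Icc (0:ℝ) T, u s ∈ U) ∧
       IntegrableOn (fun s => f (x s) (u s) s) (Icc 0 T) ∧
       (∀ τ ∈ Icc (0:ℝ) T, x τ = x0 + ∫ s in (0:ℝ)..τ, f (x s) (u s) s) ∧
       x T = xT))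
    (hne : ∃ x u, Adm x u)
    (R : ℝ)
    (hbound : ∀ x u, Adm x u → ∀ τ ∈ Icc (0:ℝ) T, ‖x τ‖ ≤ R) :
    ∃ x u, Adm x u ∧ ∀ y v, Adm y v →
      (∫ s in (0:ℝ)..T, L (x s) (u s) s) ≤ ∫ s in (0:ℝ)..T, L (y s) (v s) s := by
  have hAdm_iff : ∀ x u, Adm x u ↔ IsAdmissible f U T N t x0 xT x u := fun x u =>
    (hAdm x u).trans ⟨fun ⟨h₁, h₂, h₃, h₄, h₅⟩ => ⟨h₁, h₂, h₃, h₄, h₅⟩,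
      fun ⟨h₁, h₂, h₃, h₄, h₅⟩ => ⟨h₁, h₂, h₃, h₄, h₅⟩⟩
  obtain ⟨x₁, u₁, h₁⟩ := hne
  obtain ⟨⟨x, u⟩, hxu, hmin⟩ :=
    exists_isMinOn_of_subseq_tendsto (A := {p : (ℝ → _) × (ℝ → _) | Adm p.1 p.2})
      (J := fun p => ∫ s in (0:ℝ)..T, L (p.1 s) (p.2 s) s) ⟨(x₁, u₁), h₁⟩ fun p hp => by
        obtain ⟨y, v, hyv, φ, hφ, hlim⟩ := IsAdmissible.exists_strictMono_tendsto_cost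
          hf.continuous hL.continuous hUcompact (fun i hi => (htmono i hi).le) ht0 htN
          (fun k => (hAdm_iff _ _).1 (hp k)) fun k => hbound _ _ (hp k)
        exact ⟨(y, v), (hAdm_iff y v).2 hyv, φ, hφ, hlim⟩
  exact ⟨x, u, hxu, fun y v hyv => hmin (show (y, v) ∈ {p | Adm p.1 p.2} from hyv)⟩

/-- Filippov-type existence for the sampled-data optimal control problem (OCP_𝕋):
with controls piecewise constant on a fixed partition 𝕋 and values in a compact set `U`,
if the admissible set is nonempty and admissible states are uniformly bounded, then an
optimal solution exists — with no convexity assumption on the velocity sets. -/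
theorem stmt_9 (T : ℝ) (hT : 0 < T) (n m : ℕ) (hn : 0 < n) (hm : 0 < m)
    (x0 xT : EuclideanSpace ℝ (Fin n))
    (U : Set (EuclideanSpace ℝ (Fin m))) (hUne : U.Nonempty)
    (hUconvex : Convex ℝ U) (hUcompact : IsCompact U)
    (f : EuclideanSpace ℝ (Fin n) → EuclideanSpace ℝ (Fin m) → ℝ → EuclideanSpace ℝ (Fin n))
    (L : EuclideanSpace ℝ (Fin n) → EuclideanSpace ℝ (Fin m) → ℝ → ℝ)
    (hf : ContDiff ℝ 2 (fun q : EuclideanSpace ℝ (Fin n) × EuclideanSpace ℝ (Fin m) × ℝ =>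
      f q.1 q.2.1 q.2.2))
    (hL : ContDiff ℝ 2 (fun q : EuclideanSpace ℝ (Fin n) × EuclideanSpace ℝ (Fin m) × ℝ =>
      L q.1 q.2.1 q.2.2))
    -- the partition 𝕋 = {t_i}
    (N : ℕ) (hN : 0 < N) (t : ℕ → ℝ) (ht0 : t 0 = 0) (htN : t N = T)
    (htmono : ∀ i < N, t i < t (i + 1))
    -- the set of admissible pairs with piecewise constant control on 𝕋
    (Adm : (ℝ → EuclideanSpace ℝ (Fin n)) → (ℝ → EuclideanSpace ℝ (Fin m)) → Prop)
    (hAdm : ∀ x u, Adm x u ↔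
      ((∀ i < N, ∀ s ∈ Ico (t i) (t (i + 1)), u s = u (t i)) ∧
       (∀ s ∈ Icc (0:ℝ) T, u s ∈ U) ∧
       IntegrableOn (fun s => f (x s) (u s) s) (Icc 0 T) ∧
       (∀ τ ∈ Icc (0:ℝ) T, x τ = x0 + ∫ s in (0:ℝ)..τ, f (x s) (u s) s) ∧
       x T = xT))
    (hne : ∃ x u, Adm x u)
    (R : ℝ) (hR : 0 < R)
    (hbound : ∀ x u, Adm x u → ∀ τ ∈ Icc (0:ℝ) T, ‖x τ‖ ≤ R) :
    ∃ x u, Adm x u ∧ ∀ y v, Adm y v →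
      (∫ s in (0:ℝ)..T, L (x s) (u s) s) ≤ ∫ s in (0:ℝ)..T, L (y s) (v s) s :=
  stmt_9_general T n m x0 xT U hUcompact f L hf hL N t ht0 htN htmono Adm hAdm hne R hbound
end

section
/- Let (x,u) be admissible for the permanent optimal control problem, and let (p,p⁰) ∈ AC([0,T],ℝ^n) × ℝ_- be a nontrivial pair satisfying the adjoint equation ṗ(t) = −∇_x f(x(t),u(t),t)^⊤ p(t) − p⁰ ∇_x L(x(t),u(t),t) a.e. Then (p,p⁰) satisfies the Hamiltonian gradient condition ∇_u H(x(t),u(t),p(t),p⁰,t) ∈ N_U[u(t)] for a.e. t ∈ [0,T] if and only if ⟨p(T), w(T,u,v−u)⟩ + p⁰ w⁰(T,u,v−u) ≤ 0 for every v ∈ L^∞([0,T],U), where w(·,u,v−u) and w⁰(·,u,v−u) are the variation vectors solving the linearized state and cost equations with perturbation v−u. -/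
/-!
Along the adjoint equation the `x`-derivatives of `f` and `L` cancel in
`d/dt (⟪p, w⟫ + p⁰ w⁰)`, so integration by parts (Fubini on the triangle `σ ≤ s`) gives the
duality identity `⟪p T, w T⟫ + p⁰ w⁰ T = ∫₀ᵀ ⟪∇ᵤH, v - u⟫`. The gradient condition thus integrates
to the variational inequality. Conversely, the needle-type control equal to `ω ∈ U` on a measurable
set `S` and to `u` elsewhere gives `∫_S ⟪∇ᵤH, ω - u⟫ ≤ 0` for all `S`, hence `⟪∇ᵤH, ω - u⟫ ≤ 0`
a.e. for each fixed `ω`; a countable dense subset of `U` and the closedness of half-spaces make the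
exceptional null set independent of `ω`.
-/

open MeasureTheory Set Filter Topology
open scoped RealInnerProductSpace

section IntegrationByParts

variable {E : Type*} [NormedAddCommGroup E] [InnerProductSpace ℝ E]

theorem MeasureTheory.IntegrableOn.inner_continuousOn {K : Set ℝ} {P w : ℝ → E}
    (hP : IntegrableOn P K) (hw : ContinuousOn w K) (hK : IsCompact K) :
    IntegrableOn (fun s => ⟪P s, w s⟫) K := by
  obtain ⟨C, hC⟩ := hK.exists_bound_of_continuousOn hw
  refine Integrable.mono' (hP.norm.mul_const C)
    (hP.aestronglyMeasurable.inner (hw.aestronglyMeasurable hK.measurableSet)) ?_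
  filter_upwards [ae_restrict_mem hK.measurableSet] with s hs
  exact (norm_inner_le_norm _ _).trans (mul_le_mul_of_nonneg_left (hC s hs) (norm_nonneg _))

theorem continuousOn_of_eq_add_primitive {a b : ℝ} {W w : ℝ → E}
    (hW : IntegrableOn W (Icc a b)) (hw : ∀ t ∈ Icc a b, w t = w a + ∫ s in a..t, W s) :
    ContinuousOn w (Icc a b) := by
  refine ((continuousOn_const (c := w a)).add (intervalIntegral.continuousOn_primitive hW)).congr
    fun t ht => ?_
  rw [hw t ht, intervalIntegral.integral_of_le ht.1]
  rfl

theorem integrableOn_inner_of_eq_add_primitive {a b : ℝ} {P W w : ℝ → E}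
    (hP : IntegrableOn P (Icc a b)) (hW : IntegrableOn W (Icc a b))
    (hw : ∀ t ∈ Icc a b, w t = w a + ∫ s in a..t, W s) :
    IntegrableOn (fun s => ⟪P s, w s⟫) (Icc a b) :=
  hP.inner_continuousOn (continuousOn_of_eq_add_primitive hW hw) isCompact_Icc

variable [CompleteSpace E]

theorem integral_inner_intervalIntegral_swap {a b : ℝ} {P W : ℝ → E}
    (hP : IntegrableOn P (Icc a b)) (hW : IntegrableOn W (Icc a b)) :
    ∫ s in Icc a b, ⟪P s, ∫ σ in a..s, W σ⟫ = ∫ σ in Icc a b, ⟪∫ s in σ..b, P s, W σ⟫ := by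
  set μ := volume.restrict (Icc a b)
  set k : ℝ → ℝ → ℝ := fun s σ => if σ ≤ s then ⟪P s, W σ⟫ else 0 with hk
  have hk_int : Integrable (Function.uncurry k) (μ.prod μ) := by
    have hk_eq : Function.uncurry k =
        {z : ℝ × ℝ | z.2 ≤ z.1}.indicator (fun z => ⟪P z.1, W z.2⟫) := by
      ext ⟨s, σ⟩; simp [hk, indicator_apply]
    rw [hk_eq]
    refine Integrable.mono' (hP.norm.mul_prod hW.norm)
      ((hP.aestronglyMeasurable.comp_fst.inner hW.aestronglyMeasurable.comp_snd).indicator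
        (measurableSet_le measurable_snd measurable_fst)) ?_
    filter_upwards with z
    exact (norm_indicator_le_norm_self _ _).trans (norm_inner_le_norm _ _)
  have h_left : ∀ s ∈ Icc a b, ∫ σ, k s σ ∂μ = ⟪P s, ∫ σ in a..s, W σ⟫ := by
    intro s hs
    have hk_eq : (fun σ => k s σ) = (Iic s).indicator (fun σ => ⟪P s, W σ⟫) := by
      ext σ; simp [hk, indicator_apply]
    rw [hk_eq, setIntegral_indicator measurableSet_Iic, ← Ici_inter_Iic, inter_assoc,
      Iic_inter_Iic, inf_eq_right.2 hs.2, Ici_inter_Iic,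
      integral_inner (hW.mono_set (Icc_subset_Icc_right hs.2)), integral_Icc_eq_integral_Ioc,
      ← intervalIntegral.integral_of_le hs.1]
  have h_right : ∀ σ ∈ Icc a b, ∫ s, k s σ ∂μ = ⟪∫ s in σ..b, P s, W σ⟫ := by
    intro σ hσ
    have hk_eq : (fun s => k s σ) = (Ici σ).indicator (fun s => ⟪P s, W σ⟫) := by
      ext s; simp [hk, indicator_apply]
    rw [hk_eq, setIntegral_indicator measurableSet_Ici, ← Ici_inter_Iic, inter_right_comm,
      Ici_inter_Ici, sup_eq_right.2 hσ.1, Ici_inter_Iic]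
    simp_rw [real_inner_comm (W σ)]
    rw [integral_inner (hP.mono_set (Icc_subset_Icc_left hσ.1)), integral_Icc_eq_integral_Ioc,
      ← intervalIntegral.integral_of_le hσ.2]
  calc ∫ s in Icc a b, ⟪P s, ∫ σ in a..s, W σ⟫
      = ∫ s, ∫ σ, k s σ ∂μ ∂μ := (setIntegral_congr_fun measurableSet_Icc h_left).symm
    _ = ∫ σ, ∫ s, k s σ ∂μ ∂μ := integral_integral_swap hk_int
    _ = ∫ σ in Icc a b, ⟪∫ s in σ..b, P s, W σ⟫ := setIntegral_congr_fun measurableSet_Icc h_right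

theorem inner_sub_inner_eq_integral {a b : ℝ} (hab : a ≤ b) {P W p w : ℝ → E}
    (hP : IntegrableOn P (Icc a b)) (hW : IntegrableOn W (Icc a b))
    (hp : ∀ t ∈ Icc a b, p t = p a + ∫ s in a..t, P s)
    (hw : ∀ t ∈ Icc a b, w t = w a + ∫ s in a..t, W s) :
    ⟪p b, w b⟫ - ⟪p a, w a⟫ = ∫ s in Icc a b, (⟪P s, w s⟫ + ⟪p s, W s⟫) := by
  have hb : b ∈ Icc a b := right_mem_Icc.2 hab
  have hPw : IntegrableOn (fun s => ⟪P s, w s⟫) (Icc a b) :=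
    integrableOn_inner_of_eq_add_primitive hP hW hw
  have hpW : IntegrableOn (fun s => ⟪p s, W s⟫) (Icc a b) := by
    simpa only [real_inner_comm] using integrableOn_inner_of_eq_add_primitive hW hP hp
  have hP_int : ∫ s in Icc a b, P s = p b - p a := by
    rw [hp b hb, integral_Icc_eq_integral_Ioc, ← intervalIntegral.integral_of_le hab,
      add_sub_cancel_left]
  have hW_int : ∫ s in Icc a b, W s = w b - w a := by
    rw [hw b hb, integral_Icc_eq_integral_Ioc, ← intervalIntegral.integral_of_le hab,
      add_sub_cancel_left]
  have hP_tail : ∀ σ ∈ Icc a b, ∫ s in σ..b, P s = p b - p σ := by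
    intro σ hσ
    have hPi : ∀ t ∈ Icc a b, IntervalIntegrable P volume a t := fun t ht =>
      (intervalIntegrable_iff_integrableOn_Icc_of_le ht.1).2
        (hP.mono_set (Icc_subset_Icc_right ht.2))
    rw [hp b hb, hp σ hσ, ← intervalIntegral.integral_interval_sub_left (hPi b hb) (hPi σ hσ)]
    abel
  have h_left : ∫ s in Icc a b, ⟪P s, ∫ σ in a..s, W σ⟫
      = (∫ s in Icc a b, ⟪P s, w s⟫) - ⟪p b - p a, w a⟫ := by
    calc ∫ s in Icc a b, ⟪P s, ∫ σ in a..s, W σ⟫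
        = ∫ s in Icc a b, (⟪P s, w s⟫ - ⟪w a, P s⟫) :=
          setIntegral_congr_fun measurableSet_Icc fun s hs => by
            rw [hw s hs, inner_add_right, real_inner_comm (P s) (w a)]; ring
      _ = _ := by
        rw [integral_sub hPw (hP.const_inner _), integral_inner hP, hP_int, real_inner_comm]
  have h_right : ∫ σ in Icc a b, ⟪∫ s in σ..b, P s, W σ⟫
      = ⟪p b, w b - w a⟫ - ∫ σ in Icc a b, ⟪p σ, W σ⟫ := by
    calc ∫ σ in Icc a b, ⟪∫ s in σ..b, P s, W σ⟫
        = ∫ σ in Icc a b, (⟪p b, W σ⟫ - ⟪p σ, W σ⟫) :=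
          setIntegral_congr_fun measurableSet_Icc fun σ hσ => by rw [hP_tail σ hσ, inner_sub_left]
      _ = _ := by rw [integral_sub (hW.const_inner _) hpW, integral_inner hW, hW_int]
  have h_swap := integral_inner_intervalIntegral_swap hP hW
  rw [h_left, h_right] at h_swap
  rw [integral_add hPw hpW]
  simp only [inner_sub_left, inner_sub_right] at h_swap ⊢
  linarith

end IntegrationByParts

section VariationalInequality

variable {α F : Type*} [MeasurableSpace α] [NormedAddCommGroup F]

def LinftyIn (μ : Measure α) (U : Set F) (v : α → F) : Prop :=
  AEStronglyMeasurable v μ ∧ (∀ᵐ s ∂μ, v s ∈ U) ∧ ∃ M, ∀ᵐ s ∂μ, ‖v s‖ ≤ M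

variable {μ : Measure α}

theorem linftyIn_const {U : Set F} {ω : F} (hω : ω ∈ U) : LinftyIn μ U (fun _ => ω) :=
  ⟨aestronglyMeasurable_const, ae_of_all _ fun _ => hω, ‖ω‖, ae_of_all _ fun _ => le_rfl⟩

theorem LinftyIn.piecewise {U : Set F} {v u : α → F} {S : Set α} [DecidablePred (· ∈ S)]
    (hS : MeasurableSet S) (hv : LinftyIn μ U v) (hu : LinftyIn μ U u) :
    LinftyIn μ U (S.piecewise v u) := by
  obtain ⟨hv_meas, hv_mem, Mv, hMv⟩ := hv
  obtain ⟨hu_meas, hu_mem, Mu, hMu⟩ := hu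
  refine ⟨hv_meas.restrict.piecewise hS hu_meas.restrict, ?_, max Mv Mu, ?_⟩
  · filter_upwards [hv_mem, hu_mem] with s hvs hus
    by_cases h : s ∈ S <;> simp [h, hvs, hus]
  · filter_upwards [hMv, hMu] with s hvs hus
    by_cases h : s ∈ S <;> simp [h, hvs, hus]

theorem ae_subset_of_forall_mem_ae [TopologicalSpace.SeparableSpace F] {U : Set F}
    {C : α → Set F} (hC : ∀ s, IsClosed (C s)) (h : ∀ ω ∈ U, ∀ᵐ s ∂μ, ω ∈ C s) :
    ∀ᵐ s ∂μ, U ⊆ C s := by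
  obtain ⟨D, hDU, hD_count, hUD⟩ :=
    (TopologicalSpace.IsSeparable.of_separableSpace U).exists_countable_dense_subset
  filter_upwards [(ae_ball_iff hD_count).2 fun ω hω => h ω (hDU hω)] with s hs
  exact hUD.trans ((hC s).closure_subset_iff.2 fun ω hω => hs ω hω)

variable [InnerProductSpace ℝ F]

theorem ae_forall_inner_nonpos_iff [TopologicalSpace.SeparableSpace F] {U : Set F} {G u : α → F}
    (hu : LinftyIn μ U u)
    (hint : ∀ v, LinftyIn μ U v → Integrable (fun s => ⟪G s, v s - u s⟫) μ) :
    (∀ᵐ s ∂μ, ∀ ω ∈ U, ⟪G s, ω - u s⟫ ≤ 0) ↔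
      ∀ v, LinftyIn μ U v → ∫ s, ⟪G s, v s - u s⟫ ∂μ ≤ 0 := by
  classical
  refine ⟨fun h v hv => integral_nonpos_of_ae ?_, fun h => ?_⟩
  · filter_upwards [h, hv.2.1] with s hs hvs using hs (v s) hvs
  refine ae_subset_of_forall_mem_ae (C := fun s => {ω | ⟪G s, ω - u s⟫ ≤ 0})
    (fun s => isClosed_le (continuous_const.inner (continuous_id.sub continuous_const))
      continuous_const) ?_
  intro ω hω
  have hle : (fun s => ⟪G s, ω - u s⟫) ≤ᵐ[μ] 0 := by
    refine ae_le_of_forall_setIntegral_le (hint _ (linftyIn_const hω)) (integrable_zero _ _ μ)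
      fun S hS _ => ?_
    have hneedle := h _ ((linftyIn_const hω).piecewise hS hu)
    simp only [Pi.zero_apply, integral_zero]
    rw [← integral_indicator hS]
    convert hneedle using 3 with s
    by_cases hs : s ∈ S <;> simp [hs]
  filter_upwards [hle] with s hs using hs

end VariationalInequality

section Gradient

variable {E G : Type*} [NormedAddCommGroup E] [InnerProductSpace ℝ E] [CompleteSpace E]
  [NormedAddCommGroup G] [InnerProductSpace ℝ G]

theorem inner_gradient_inner_apply {g : E → G} {x : E} (hg : DifferentiableAt ℝ g x) (c : G)
    (h : E) : ⟪gradient (fun y => ⟪c, g y⟫) x, h⟫ = ⟪c, fderiv ℝ g x h⟫ := by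
  rw [inner_gradient_left, fderiv_inner_apply (𝕜 := ℝ) (differentiableAt_const c) hg]
  simp

theorem inner_gradient_inner_add_mul_apply {g : E → G} {ℓ : E → ℝ} {x : E}
    (hg : DifferentiableAt ℝ g x) (hℓ : DifferentiableAt ℝ ℓ x) (c : G) (r : ℝ) (h : E) :
    ⟪gradient (fun y => ⟪c, g y⟫ + r * ℓ y) x, h⟫ =
      ⟪c, fderiv ℝ g x h⟫ + r * ⟪gradient ℓ x, h⟫ := by
  rw [inner_gradient_left,
    fderiv_fun_add ((differentiableAt_const c).inner ℝ hg) (hℓ.const_mul r), fderiv_const_mul hℓ,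
    ← inner_gradient_inner_apply hg, inner_gradient_left, inner_gradient_left]
  rfl

end Gradient

section Duality

variable {E F : Type*} [NormedAddCommGroup E] [InnerProductSpace ℝ E] [CompleteSpace E]
  [NormedAddCommGroup F] [InnerProductSpace ℝ F] [CompleteSpace F]

theorem inner_variation_add_cost_eq_integral {T : ℝ} (hT : 0 ≤ T) {f : E → F → ℝ → E}
    {L : E → F → ℝ → ℝ} (hf : Differentiable ℝ (fun q : E × F × ℝ => f q.1 q.2.1 q.2.2))
    (hL : Differentiable ℝ (fun q : E × F × ℝ => L q.1 q.2.1 q.2.2))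
    {x p w : ℝ → E} {u v : ℝ → F} {p0 : ℝ} {w0 : ℝ → ℝ}
    (hpint : IntegrableOn (fun s =>
      -(gradient (fun y => ⟪p s, f y (u s) s⟫) (x s))
        - p0 • gradient (fun y => L y (u s) s) (x s)) (Icc 0 T))
    (hpode : ∀ t ∈ Icc (0:ℝ) T, p t = p 0 + ∫ s in (0:ℝ)..t,
      (-(gradient (fun y => ⟪p s, f y (u s) s⟫) (x s))
        - p0 • gradient (fun y => L y (u s) s) (x s)))
    (hwint : IntegrableOn (fun s =>
      (fderiv ℝ (fun y => f y (u s) s) (x s)) (w s)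
        + (fderiv ℝ (fun ω => f (x s) ω s) (u s)) (v s - u s)) (Icc 0 T))
    (hw : ∀ t ∈ Icc (0:ℝ) T, w t = ∫ s in (0:ℝ)..t,
      ((fderiv ℝ (fun y => f y (u s) s) (x s)) (w s)
        + (fderiv ℝ (fun ω => f (x s) ω s) (u s)) (v s - u s)))
    (hw0int : IntegrableOn (fun s =>
      ⟪gradient (fun y => L y (u s) s) (x s), w s⟫
        + ⟪gradient (fun ω => L (x s) ω s) (u s), v s - u s⟫) (Icc 0 T))
    (hw0 : ∀ t ∈ Icc (0:ℝ) T, w0 t = ∫ s in (0:ℝ)..t,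
      (⟪gradient (fun y => L y (u s) s) (x s), w s⟫
        + ⟪gradient (fun ω => L (x s) ω s) (u s), v s - u s⟫)) :
    IntegrableOn (fun s =>
        ⟪gradient (fun ψ => ⟪p s, f (x s) ψ s⟫ + p0 * L (x s) ψ s) (u s), v s - u s⟫)
        (Icc 0 T) ∧
      ⟪p T, w T⟫ + p0 * w0 T = ∫ s in Icc 0 T,
        ⟪gradient (fun ψ => ⟪p s, f (x s) ψ s⟫ + p0 * L (x s) ψ s) (u s), v s - u s⟫ := by
  set P : ℝ → E := fun s => -(gradient (fun y => ⟪p s, f y (u s) s⟫) (x s))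
    - p0 • gradient (fun y => L y (u s) s) (x s)
  set W : ℝ → E := fun s => (fderiv ℝ (fun y => f y (u s) s) (x s)) (w s)
    + (fderiv ℝ (fun ω => f (x s) ω s) (u s)) (v s - u s)
  set W0 : ℝ → ℝ := fun s => ⟪gradient (fun y => L y (u s) s) (x s), w s⟫
    + ⟪gradient (fun ω => L (x s) ω s) (u s), v s - u s⟫
  have h0 : (0 : ℝ) ∈ Icc 0 T := left_mem_Icc.2 hT
  have hT_mem : T ∈ Icc 0 T := right_mem_Icc.2 hT
  have hw_zero : w 0 = 0 := by rw [hw 0 h0, intervalIntegral.integral_same]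
  have hw' : ∀ t ∈ Icc 0 T, w t = w 0 + ∫ s in (0:ℝ)..t, W s := fun t ht => by
    rw [hw_zero, zero_add, hw t ht]
  have hpoint : ∀ s, ⟪P s, w s⟫ + ⟪p s, W s⟫ + p0 * W0 s =
      ⟪gradient (fun ψ => ⟪p s, f (x s) ψ s⟫ + p0 * L (x s) ψ s) (u s), v s - u s⟫ := by
    intro s
    have hfx : DifferentiableAt ℝ (fun y => f y (u s) s) (x s) :=
      (hf.comp (differentiable_id.prodMk (differentiable_const (u s, s)))).differentiableAt
    have hfu : DifferentiableAt ℝ (fun ω => f (x s) ω s) (u s) :=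
      (hf.comp ((differentiable_const (x s)).prodMk
        (differentiable_id.prodMk (differentiable_const s)))).differentiableAt
    have hLu : DifferentiableAt ℝ (fun ω => L (x s) ω s) (u s) :=
      (hL.comp ((differentiable_const (x s)).prodMk
        (differentiable_id.prodMk (differentiable_const s)))).differentiableAt
    rw [inner_gradient_inner_add_mul_apply hfu hLu]
    simp only [P, W, W0, inner_sub_left, inner_neg_left, real_inner_smul_left, inner_add_right,
      inner_gradient_inner_apply hfx]
    ring
  have hPw : IntegrableOn (fun s => ⟪P s, w s⟫) (Icc 0 T) :=
    integrableOn_inner_of_eq_add_primitive hpint hwint hw'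
  have hpW : IntegrableOn (fun s => ⟪p s, W s⟫) (Icc 0 T) := by
    simpa only [real_inner_comm] using integrableOn_inner_of_eq_add_primitive hwint hpint hpode
  refine ⟨((hPw.add hpW).add (hw0int.const_mul p0)).congr_fun (fun s _ => hpoint s)
    measurableSet_Icc, ?_⟩
  calc ⟪p T, w T⟫ + p0 * w0 T
      = (∫ s in Icc 0 T, (⟪P s, w s⟫ + ⟪p s, W s⟫)) + ∫ s in Icc 0 T, p0 * W0 s := by
        rw [← inner_sub_inner_eq_integral hT hpint hwint hpode hw', hw_zero, inner_zero_right,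
          sub_zero, hw0 T hT_mem, intervalIntegral.integral_of_le hT,
          ← integral_Icc_eq_integral_Ioc, integral_const_mul]
    _ = ∫ s in Icc 0 T, (⟪P s, w s⟫ + ⟪p s, W s⟫ + p0 * W0 s) :=
        (integral_add (hPw.add hpW) (hw0int.const_mul p0)).symm
    _ = _ := setIntegral_congr_fun measurableSet_Icc fun s _ => hpoint s

end Duality

theorem stmt_10_general (T : ℝ) (hT : 0 < T) (n m : ℕ)
    (U : Set (EuclideanSpace ℝ (Fin m)))
    (f : EuclideanSpace ℝ (Fin n) → EuclideanSpace ℝ (Fin m) → ℝ → EuclideanSpace ℝ (Fin n))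
    (L : EuclideanSpace ℝ (Fin n) → EuclideanSpace ℝ (Fin m) → ℝ → ℝ)
    (hf : ContDiff ℝ 2 (fun q : EuclideanSpace ℝ (Fin n) × EuclideanSpace ℝ (Fin m) × ℝ =>
      f q.1 q.2.1 q.2.2))
    (hL : ContDiff ℝ 2 (fun q : EuclideanSpace ℝ (Fin n) × EuclideanSpace ℝ (Fin m) × ℝ =>
      L q.1 q.2.1 q.2.2))
    -- the class L^∞([0,T],U) of controls
    (LinfU : (ℝ → EuclideanSpace ℝ (Fin m)) → Prop)
    (hLinfU : ∀ v, LinfU v ↔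
      (AEStronglyMeasurable v (volume.restrict (Icc 0 T)) ∧
       (∀ᵐ s ∂(volume.restrict (Icc (0:ℝ) T)), v s ∈ U) ∧
       ∃ Mv, ∀ᵐ s ∂(volume.restrict (Icc (0:ℝ) T)), ‖v s‖ ≤ Mv))
    -- the admissible pair (x,u)
    (x : ℝ → EuclideanSpace ℝ (Fin n)) (u : ℝ → EuclideanSpace ℝ (Fin m))
    (hu : LinfU u)
    -- the nontrivial pair (p,p⁰) satisfying the adjoint equation
    (p : ℝ → EuclideanSpace ℝ (Fin n)) (p0 : ℝ)
    (hpint : IntegrableOn (fun s =>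
      -(gradient (fun y => ⟪p s, f y (u s) s⟫) (x s))
        - p0 • gradient (fun y => L y (u s) s) (x s)) (Icc 0 T))
    (hpode : ∀ t ∈ Icc (0:ℝ) T, p t = p 0 + ∫ s in (0:ℝ)..t,
      (-(gradient (fun y => ⟪p s, f y (u s) s⟫) (x s))
        - p0 • gradient (fun y => L y (u s) s) (x s)))
    -- the variation vectors w(·,u,v−u) and w⁰(·,u,v−u)
    (w : (ℝ → EuclideanSpace ℝ (Fin m)) → ℝ → EuclideanSpace ℝ (Fin n))
    (w0 : (ℝ → EuclideanSpace ℝ (Fin m)) → ℝ → ℝ)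
    (hwint : ∀ v, LinfU v → IntegrableOn (fun s =>
      (fderiv ℝ (fun y => f y (u s) s) (x s)) (w v s)
        + (fderiv ℝ (fun ω => f (x s) ω s) (u s)) (v s - u s)) (Icc 0 T))
    (hw : ∀ v, LinfU v → ∀ t ∈ Icc (0:ℝ) T, w v t = ∫ s in (0:ℝ)..t,
      ((fderiv ℝ (fun y => f y (u s) s) (x s)) (w v s)
        + (fderiv ℝ (fun ω => f (x s) ω s) (u s)) (v s - u s)))
    (hw0int : ∀ v, LinfU v → IntegrableOn (fun s =>
      ⟪gradient (fun y => L y (u s) s) (x s), w v s⟫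
        + ⟪gradient (fun ω => L (x s) ω s) (u s), v s - u s⟫) (Icc 0 T))
    (hw0 : ∀ v, LinfU v → ∀ t ∈ Icc (0:ℝ) T, w0 v t = ∫ s in (0:ℝ)..t,
      (⟪gradient (fun y => L y (u s) s) (x s), w v s⟫
        + ⟪gradient (fun ω => L (x s) ω s) (u s), v s - u s⟫)) :
    -- Hamiltonian gradient condition ⟺ variational inequality
    ((∀ᵐ t ∂(volume.restrict (Icc (0:ℝ) T)), ∀ ω ∈ U,
        ⟪gradient (fun ψ => ⟪p t, f (x t) ψ t⟫ + p0 * L (x t) ψ t) (u t), ω - u t⟫ ≤ 0)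
      ↔ (∀ v, LinfU v → ⟪p T, w v T⟫ + p0 * w0 v T ≤ 0)) := by
  have hLinf : ∀ v, LinfU v ↔ LinftyIn (volume.restrict (Icc 0 T)) U v := hLinfU
  have hpairing := fun v (hv : LinfU v) => inner_variation_add_cost_eq_integral hT.le
    (hf.differentiable (by norm_num)) (hL.differentiable (by norm_num)) hpint hpode
    (hwint v hv) (hw v hv) (hw0int v hv) (hw0 v hv)
  rw [ae_forall_inner_nonpos_iff ((hLinf u).1 hu) fun v hv =>
    (hpairing v ((hLinf v).2 hv)).1]
  refine forall_congr' fun v => ?_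
  rw [← hLinf v]
  exact imp_congr_right fun hv => by rw [(hpairing v hv).2]

/-- Characterization of weak extremal lifts (permanent case): a nontrivial pair `(p,p⁰)`
satisfying the adjoint equation satisfies the Hamiltonian gradient condition
`∇_u H(x(t),u(t),p(t),p⁰,t) ∈ N_U[u(t)]` a.e. if and only if
`⟨p(T), w(T,u,v−u)⟩ + p⁰ w⁰(T,u,v−u) ≤ 0` for every `v ∈ L^∞([0,T],U)`. -/
theorem stmt_10 (T : ℝ) (hT : 0 < T) (n m : ℕ) (hn : 0 < n) (hm : 0 < m)
    (x0 xT : EuclideanSpace ℝ (Fin n))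
    (U : Set (EuclideanSpace ℝ (Fin m))) (hUne : U.Nonempty)
    (hUclosed : IsClosed U) (hUconvex : Convex ℝ U)
    (f : EuclideanSpace ℝ (Fin n) → EuclideanSpace ℝ (Fin m) → ℝ → EuclideanSpace ℝ (Fin n))
    (L : EuclideanSpace ℝ (Fin n) → EuclideanSpace ℝ (Fin m) → ℝ → ℝ)
    (hf : ContDiff ℝ 2 (fun q : EuclideanSpace ℝ (Fin n) × EuclideanSpace ℝ (Fin m) × ℝ =>
      f q.1 q.2.1 q.2.2))
    (hL : ContDiff ℝ 2 (fun q : EuclideanSpace ℝ (Fin n) × EuclideanSpace ℝ (Fin m) × ℝ =>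
      L q.1 q.2.1 q.2.2))
    -- the class L^∞([0,T],U) of controls
    (LinfU : (ℝ → EuclideanSpace ℝ (Fin m)) → Prop)
    (hLinfU : ∀ v, LinfU v ↔
      (AEStronglyMeasurable v (volume.restrict (Icc 0 T)) ∧
       (∀ᵐ s ∂(volume.restrict (Icc (0:ℝ) T)), v s ∈ U) ∧
       ∃ Mv, ∀ᵐ s ∂(volume.restrict (Icc (0:ℝ) T)), ‖v s‖ ≤ Mv))
    -- the admissible pair (x,u)
    (x : ℝ → EuclideanSpace ℝ (Fin n)) (u : ℝ → EuclideanSpace ℝ (Fin m))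
    (hu : LinfU u)
    (hxint : IntegrableOn (fun s => f (x s) (u s) s) (Icc 0 T))
    (hxode : ∀ t ∈ Icc (0:ℝ) T, x t = x0 + ∫ s in (0:ℝ)..t, f (x s) (u s) s)
    (hxT : x T = xT)
    -- the nontrivial pair (p,p⁰) satisfying the adjoint equation
    (p : ℝ → EuclideanSpace ℝ (Fin n)) (p0 : ℝ) (hp0 : p0 ≤ 0)
    (hnontriv : ¬ (p0 = 0 ∧ ∀ t ∈ Icc (0:ℝ) T, p t = 0))
    (hpint : IntegrableOn (fun s =>
      -(gradient (fun y => ⟪p s, f y (u s) s⟫) (x s))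
        - p0 • gradient (fun y => L y (u s) s) (x s)) (Icc 0 T))
    (hpode : ∀ t ∈ Icc (0:ℝ) T, p t = p 0 + ∫ s in (0:ℝ)..t,
      (-(gradient (fun y => ⟪p s, f y (u s) s⟫) (x s))
        - p0 • gradient (fun y => L y (u s) s) (x s)))
    -- the variation vectors w(·,u,v−u) and w⁰(·,u,v−u)
    (w : (ℝ → EuclideanSpace ℝ (Fin m)) → ℝ → EuclideanSpace ℝ (Fin n))
    (w0 : (ℝ → EuclideanSpace ℝ (Fin m)) → ℝ → ℝ)
    (hwint : ∀ v, LinfU v → IntegrableOn (fun s =>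
      (fderiv ℝ (fun y => f y (u s) s) (x s)) (w v s)
        + (fderiv ℝ (fun ω => f (x s) ω s) (u s)) (v s - u s)) (Icc 0 T))
    (hw : ∀ v, LinfU v → ∀ t ∈ Icc (0:ℝ) T, w v t = ∫ s in (0:ℝ)..t,
      ((fderiv ℝ (fun y => f y (u s) s) (x s)) (w v s)
        + (fderiv ℝ (fun ω => f (x s) ω s) (u s)) (v s - u s)))
    (hw0int : ∀ v, LinfU v → IntegrableOn (fun s =>
      ⟪gradient (fun y => L y (u s) s) (x s), w v s⟫
        + ⟪gradient (fun ω => L (x s) ω s) (u s), v s - u s⟫) (Icc 0 T))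
    (hw0 : ∀ v, LinfU v → ∀ t ∈ Icc (0:ℝ) T, w0 v t = ∫ s in (0:ℝ)..t,
      (⟪gradient (fun y => L y (u s) s) (x s), w v s⟫
        + ⟪gradient (fun ω => L (x s) ω s) (u s), v s - u s⟫)) :
    -- Hamiltonian gradient condition ⟺ variational inequality
    ((∀ᵐ t ∂(volume.restrict (Icc (0:ℝ) T)), ∀ ω ∈ U,
        ⟪gradient (fun ψ => ⟪p t, f (x t) ψ t⟫ + p0 * L (x t) ψ t) (u t), ω - u t⟫ ≤ 0)
      ↔ (∀ v, LinfU v → ⟪p T, w v T⟫ + p0 * w0 v T ≤ 0)) :=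
  stmt_10_general T hT n m U f L hf hL LinfU hLinfU x u hu p p0 hpint hpode w w0 hwint hw hw0int hw0
end

section
/- Let 𝕋 = {t_i}_{i=0,…,N} be a partition of [0,T], (x,u) admissible for the sampled-data problem with u constant equal to u_i on [t_i,t_{i+1}), and (p,p⁰) ∈ AC × ℝ_- a nontrivial pair satisfying the adjoint equation. Then the averaged Hamiltonian gradient condition ∫_{t_i}^{t_{i+1}} ∇_u H(x(s),u_i,p(s),p⁰,s) ds ∈ N_U[u_i] holds for every i ∈ {0,…,N−1} if and only if ⟨p(T), w(T,u,v−u)⟩ + p⁰ w⁰(T,u,v−u) ≤ 0 for every piecewise constant v ∈ PC^𝕋 with values in U. -/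
/-!
Write `z_v = ⟪p, w_v⟫ + p⁰ w⁰_v`. Integrating by parts (Fubini on the two triangles of
`[0, T]²`) and inserting the adjoint and linearized equations, the `x`-derivatives of `f` and `L`
cancel, so `z_v(T) = ∫₀ᵀ ⟪∇_u H(s, u(s)), v(s) - u(s)⟫ ds`. As `u` and `v` are constant on
every sampling interval, this is `∑ᵢ ⟪∫_{tᵢ}^{tᵢ₊₁} ∇_u H(s, uᵢ) ds, vᵢ - uᵢ⟫`. The averaged
condition makes every term nonpositive; conversely, replacing `u` by an arbitrary `ω ∈ U` on a
single sampling interval isolates one term.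
-/

open MeasureTheory Set Filter Topology
open scoped RealInnerProductSpace

section Partition

variable {β : Type*} {t : ℕ → ℝ} {N : ℕ}

def IsPiecewiseConstOn (t : ℕ → ℝ) (N : ℕ) (v : ℝ → β) : Prop :=
  ∀ i < N, ∀ s ∈ Ico (t i) (t (i + 1)), v s = v (t i)

theorem mem_Icc_of_monotoneOn (ht : MonotoneOn t (Iic N)) {i : ℕ} (hi : i ≤ N) :
    t i ∈ Icc (t 0) (t N) :=
  ⟨ht (mem_Iic.2 (Nat.zero_le N)) (mem_Iic.2 hi) (Nat.zero_le i),
    ht (mem_Iic.2 hi) (mem_Iic.2 le_rfl) hi⟩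

theorem mem_Ico_iff_eq_of_monotoneOn (ht : MonotoneOn t (Iic N)) {i j : ℕ} (hi : i < N)
    (hj : j < N) {s : ℝ} (hs : s ∈ Ico (t j) (t (j + 1))) :
    s ∈ Ico (t i) (t (i + 1)) ↔ j = i := by
  refine ⟨fun hs' => ?_, fun hji => hji ▸ hs⟩
  by_contra hji
  rcases Nat.lt_or_gt_of_ne hji with h | h
  · have := ht (mem_Iic.2 hj) (mem_Iic.2 hi.le) h
    linarith [hs.2, hs'.1]
  · have := ht (mem_Iic.2 hi) (mem_Iic.2 hj.le) h
    linarith [hs.1, hs'.2]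

theorem IsPiecewiseConstOn.piecewise_Ico {u : ℝ → β} (hu : IsPiecewiseConstOn t N u)
    (ht : MonotoneOn t (Iic N)) {i : ℕ} (hi : i < N) (ω : β) :
    IsPiecewiseConstOn t N ((Ico (t i) (t (i + 1))).piecewise (fun _ => ω) u) := by
  intro j hj s hs
  have htj : t j ∈ Ico (t j) (t (j + 1)) := ⟨le_rfl, hs.1.trans_lt hs.2⟩
  by_cases hji : j = i
  · subst hji
    rw [piecewise_eq_of_mem _ _ _ hs, piecewise_eq_of_mem _ _ _ htj]
  · rw [piecewise_eq_of_notMem _ _ _ (by rwa [mem_Ico_iff_eq_of_monotoneOn ht hi hj hs]),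
      piecewise_eq_of_notMem _ _ _ (by rwa [mem_Ico_iff_eq_of_monotoneOn ht hi hj htj]),
      hu j hj s hs]

end Partition

section Gradient

variable {E F : Type*} [NormedAddCommGroup E] [InnerProductSpace ℝ E]
  [NormedAddCommGroup F] [InnerProductSpace ℝ F]
  {G : Type*} [NormedAddCommGroup G] [NormedSpace ℝ G]

theorem Differentiable.differentiableAt_partial_fst
    {f : E → F → ℝ → G} (hf : Differentiable ℝ fun q : E × F × ℝ => f q.1 q.2.1 q.2.2)
    (x : E) (u : F) (s : ℝ) : DifferentiableAt ℝ (fun y => f y u s) x :=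
  (hf _).comp x (differentiableAt_id.prodMk (differentiableAt_const (u, s)))

theorem Differentiable.differentiableAt_partial_snd
    {f : E → F → ℝ → G} (hf : Differentiable ℝ fun q : E × F × ℝ => f q.1 q.2.1 q.2.2)
    (x : E) (u : F) (s : ℝ) : DifferentiableAt ℝ (fun ψ => f x ψ s) u :=
  (hf _).comp u ((differentiableAt_const x).prodMk (differentiableAt_id.prodMk
    (differentiableAt_const s)))

variable [CompleteSpace F]

theorem inner_gradient_inner_left {g : F → E} {x : F} (p : E) (hg : DifferentiableAt ℝ g x)
    (v : F) : ⟪gradient (fun y => ⟪p, g y⟫) x, v⟫ = ⟪p, fderiv ℝ g x v⟫ := by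
  rw [inner_gradient_left, fderiv_inner_apply ℝ (differentiableAt_const p) hg]
  simp

theorem inner_gradient_inner_add_mul {g : F → E} {l : F → ℝ} {x : F} (p : E) (c : ℝ)
    (hg : DifferentiableAt ℝ g x) (hl : DifferentiableAt ℝ l x) (v : F) :
    ⟪gradient (fun ψ => ⟪p, g ψ⟫ + c * l ψ) x, v⟫
      = ⟪p, fderiv ℝ g x v⟫ + c * ⟪gradient l x, v⟫ := by
  rw [inner_gradient_left, fderiv_fun_add ((differentiableAt_const p).inner ℝ hg) (hl.const_mul c),
    add_apply, fderiv_inner_apply ℝ (differentiableAt_const p) hg,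
    fderiv_const_mul hl, inner_gradient_left]
  simp

/-- Along the adjoint and linearized equations this is
`d/ds (⟪p, w⟫ + p⁰ w⁰) = ⟪∇_u H, v - u⟫`: the `x`-derivatives cancel. -/
theorem hamiltonian_pairing_identity [CompleteSpace E] {fx : E → E} {fu : F → E}
    {Lx : E → ℝ} {Lu : F → ℝ} {p x W : E} {u d : F} (c : ℝ) (hfx : DifferentiableAt ℝ fx x)
    (hfu : DifferentiableAt ℝ fu u) (hLu : DifferentiableAt ℝ Lu u) :
    ⟪-gradient (fun y => ⟪p, fx y⟫) x - c • gradient Lx x, W⟫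
        + ⟪p, fderiv ℝ fx x W + fderiv ℝ fu u d⟫ + c * (⟪gradient Lx x, W⟫ + ⟪gradient Lu u, d⟫)
      = ⟪gradient (fun ψ => ⟪p, fu ψ⟫ + c * Lu ψ) u, d⟫ := by
  rw [inner_gradient_inner_add_mul p c hfu hLu, inner_sub_left, inner_neg_left,
    real_inner_smul_left, inner_gradient_inner_left p hfx, inner_add_right]
  ring

end Gradient

section IntegrationByParts

variable {E : Type*} [NormedAddCommGroup E] [InnerProductSpace ℝ E]

theorem MeasureTheory.Integrable.inner_prod {α β : Type*} [MeasurableSpace α]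
    [MeasurableSpace β] {μ : Measure α} {ν : Measure β} [SFinite ν] {a : α → E} {b : β → E}
    (ha : Integrable a μ) (hb : Integrable b ν) :
    Integrable (fun z : α × β => ⟪a z.1, b z.2⟫) (μ.prod ν) :=
  (ha.norm.mul_prod hb.norm).mono'
    (ha.aestronglyMeasurable.comp_fst.inner hb.aestronglyMeasurable.comp_snd)
    (Eventually.of_forall fun z => by simpa using norm_inner_le_norm (𝕜 := ℝ) (a z.1) (b z.2))

variable [CompleteSpace E] {μ : Measure ℝ} {a b : ℝ → E}

theorem integral_inner_const (ha : Integrable a μ) (c : E) :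
    ∫ s, ⟪a s, c⟫ ∂μ = ⟪∫ s, a s ∂μ, c⟫ := by
  simp_rw [real_inner_comm c]
  exact integral_inner ha c

theorem integral_indicator_Iic_inner (hb : Integrable b μ) (c : E) (s : ℝ) :
    ∫ r, (Iic s).indicator (fun r => ⟪c, b r⟫) r ∂μ = ⟪c, ∫ r, (Iic s).indicator b r ∂μ⟫ := by
  rw [← integral_inner (hb.indicator measurableSet_Iic)]
  refine integral_congr_ae (Eventually.of_forall fun r => ?_)
  by_cases hrs : r ∈ Iic s <;> simp [hrs]

variable [SFinite μ]

theorem integrable_inner_integral_indicator_Iic (ha : Integrable a μ) (hb : Integrable b μ) :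
    Integrable (fun s => ⟪a s, ∫ r, (Iic s).indicator b r ∂μ⟫) μ := by
  refine ((ha.inner_prod hb).indicator
    (measurableSet_le measurable_snd measurable_fst)).integral_prod_left.congr
    (Eventually.of_forall fun s => ?_)
  dsimp only
  rw [← integral_indicator_Iic_inner hb]
  rfl

theorem integral_inner_integral_indicator_Iic_add [NullSingletonClass μ]
    (ha : Integrable a μ) (hb : Integrable b μ) :
    ∫ s, ⟪a s, ∫ r, (Iic s).indicator b r ∂μ⟫ ∂μ
      + ∫ s, ⟪∫ r, (Iic s).indicator a r ∂μ, b s⟫ ∂μ = ⟪∫ s, a s ∂μ, ∫ s, b s ∂μ⟫ := by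
  set K : ℝ × ℝ → ℝ := fun z => ⟪a z.1, b z.2⟫
  set lower := {z : ℝ × ℝ | z.2 ≤ z.1}.indicator K
  set upper := {z : ℝ × ℝ | z.1 ≤ z.2}.indicator K
  have hK : Integrable K (μ.prod μ) := ha.inner_prod hb
  have hlower := hK.indicator (measurableSet_le measurable_snd measurable_fst)
  have hupper := hK.indicator (measurableSet_le measurable_fst measurable_snd)
  have hlower_slice (s : ℝ) :
      ⟪a s, ∫ r, (Iic s).indicator b r ∂μ⟫ = ∫ r, lower (s, r) ∂μ := by
    rw [← integral_indicator_Iic_inner hb]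
    rfl
  have hupper_slice (s : ℝ) :
      ⟪∫ r, (Iic s).indicator a r ∂μ, b s⟫ = ∫ r, upper (r, s) ∂μ := by
    rw [real_inner_comm, ← integral_indicator_Iic_inner ha]
    refine integral_congr_ae (Eventually.of_forall fun r => ?_)
    by_cases hrs : r ≤ s <;> simp [upper, K, hrs, real_inner_comm]
  -- the diagonal `r = s`, counted in both triangles, is a null set
  have hdiag (s : ℝ) : ∫ r, (lower (s, r) + upper (s, r)) ∂μ = ∫ r, K (s, r) ∂μ := by
    refine integral_congr_ae ?_
    filter_upwards [μ.ae_ne s] with r hrs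
    rcases hrs.lt_or_gt with h | h <;> simp [lower, upper, h.le, h.not_ge]
  simp_rw [hlower_slice, hupper_slice]
  calc ∫ s, ∫ r, lower (s, r) ∂μ ∂μ + ∫ s, ∫ r, upper (r, s) ∂μ ∂μ
      = ∫ z, lower z ∂(μ.prod μ) + ∫ z, upper z ∂(μ.prod μ) := by
        rw [integral_prod _ hlower, integral_prod_symm _ hupper]
    _ = ∫ s, ∫ r, (lower (s, r) + upper (s, r)) ∂μ ∂μ := by
        rw [← integral_add hlower hupper,
          integral_prod (fun z => lower z + upper z) (hlower.add hupper)]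
    _ = ∫ s, ⟪a s, ∫ r, b r ∂μ⟫ ∂μ := by
        simp_rw [hdiag, K, integral_inner hb]
    _ = ⟪∫ s, a s ∂μ, ∫ s, b s ∂μ⟫ := integral_inner_const ha _

theorem integral_inner_add_inner_eq_sub {P W : ℝ → E} {α β : ℝ} (hαβ : α ≤ β)
    (ha : IntervalIntegrable a volume α β) (hb : IntervalIntegrable b volume α β)
    (hP : ∀ τ ∈ Icc α β, P τ = P α + ∫ s in α..τ, a s)
    (hW : ∀ τ ∈ Icc α β, W τ = W α + ∫ s in α..τ, b s) :
    ∫ s in α..β, (⟪a s, W s⟫ + ⟪P s, b s⟫) = ⟪P β, W β⟫ - ⟪P α, W α⟫ := by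
  set μ := volume.restrict (Ioc α β)
  have ha' : Integrable a μ := (intervalIntegrable_iff_integrableOn_Ioc_of_le hαβ).1 ha
  have hb' : Integrable b μ := (intervalIntegrable_iff_integrableOn_Ioc_of_le hαβ).1 hb
  have hprim (g : ℝ → E) {τ : ℝ} (hτ : τ ∈ Icc α β) :
      ∫ s in α..τ, g s = ∫ r, (Iic τ).indicator g r ∂μ := by
    rw [← intervalIntegral.integral_indicator hτ, intervalIntegral.integral_of_le hαβ]
    rfl
  have hsplit : EqOn (fun s => ⟪a s, W s⟫ + ⟪P s, b s⟫) (fun s => (⟪a s, W α⟫ + ⟪P α, b s⟫)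
      + (⟪a s, ∫ r, (Iic s).indicator b r ∂μ⟫ + ⟪∫ r, (Iic s).indicator a r ∂μ, b s⟫))
      (uIcc α β) := fun s hs => by
    rw [uIcc_of_le hαβ] at hs
    simp only [hP s hs, hW s hs, hprim _ hs, inner_add_left, inner_add_right]
    ring
  have hβ : β ∈ Icc α β := ⟨hαβ, le_rfl⟩
  calc ∫ s in α..β, (⟪a s, W s⟫ + ⟪P s, b s⟫)
      = ∫ s, ((⟪a s, W α⟫ + ⟪P α, b s⟫)
          + (⟪a s, ∫ r, (Iic s).indicator b r ∂μ⟫ + ⟪∫ r, (Iic s).indicator a r ∂μ, b s⟫)) ∂μ := by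
        rw [intervalIntegral.integral_congr hsplit, intervalIntegral.integral_of_le hαβ]
    _ = (⟪∫ s, a s ∂μ, W α⟫ + ⟪P α, ∫ s, b s ∂μ⟫) + ⟪∫ s, a s ∂μ, ∫ s, b s ∂μ⟫ := by
        have hBa := (integrable_inner_integral_indicator_Iic hb' ha').congr
          (Eventually.of_forall fun s => real_inner_comm _ _)
        rw [integral_add ((ha'.inner_const _).fun_add (hb'.const_inner _))
            ((integrable_inner_integral_indicator_Iic ha' hb').fun_add hBa),
          integral_add (ha'.inner_const _) (hb'.const_inner _),
          integral_add (integrable_inner_integral_indicator_Iic ha' hb') hBa,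
          integral_inner_integral_indicator_Iic_add ha' hb', integral_inner hb',
          integral_inner_const ha']
    _ = ⟪P β, W β⟫ - ⟪P α, W α⟫ := by
        rw [hP β hβ, hW β hβ, intervalIntegral.integral_of_le hαβ,
          intervalIntegral.integral_of_le hαβ]
        simp only [inner_add_left, inner_add_right]
        ring

end IntegrationByParts

section PrimitivePairing

variable {E : Type*} [NormedAddCommGroup E] [InnerProductSpace ℝ E]

theorem IntervalIntegrable.inner_const {k : ℝ → E} {a b : ℝ}
    (hk : IntervalIntegrable k volume a b) (d : E) :
    IntervalIntegrable (fun s => ⟪k s, d⟫) volume a b :=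
  ⟨hk.1.inner_const d, hk.2.inner_const d⟩

variable [CompleteSpace E]

theorem intervalIntegral.integral_inner_const {k : ℝ → E} {a b : ℝ}
    (hk : IntervalIntegrable k volume a b) (d : E) :
    ∫ s in a..b, ⟪k s, d⟫ = ⟪∫ s in a..b, k s, d⟫ := by
  simp only [intervalIntegral, _root_.integral_inner_const hk.1, _root_.integral_inner_const hk.2,
    inner_sub_left]

theorem inner_add_mul_eq_integral_of_primitive {P W a b : ℝ → E} {W0 c h : ℝ → ℝ}
    {α β c0 : ℝ} (hαβ : α ≤ β) (ha : IntervalIntegrable a volume α β)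
    (hb : IntervalIntegrable b volume α β) (hc : IntervalIntegrable c volume α β)
    (hh : IntervalIntegrable h volume α β)
    (hP : ∀ τ ∈ Icc α β, P τ = P α + ∫ s in α..τ, a s)
    (hW : ∀ τ ∈ Icc α β, W τ = ∫ s in α..τ, b s)
    (hW0 : ∀ τ ∈ Icc α β, W0 τ = ∫ s in α..τ, c s)
    (hpt : ∀ s, ⟪a s, W s⟫ + ⟪P s, b s⟫ + c0 * c s = h s) :
    ⟪P β, W β⟫ + c0 * W0 β = ∫ s in α..β, h s := by
  have hβ : β ∈ Icc α β := ⟨hαβ, le_rfl⟩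
  have hWα : W α = 0 := by rw [hW α ⟨le_rfl, hαβ⟩, intervalIntegral.integral_same]
  have hparts := integral_inner_add_inner_eq_sub (W := W) hαβ ha hb hP fun τ hτ => by
    rw [hWα, zero_add]
    exact hW τ hτ
  rw [hWα, inner_zero_right, sub_zero] at hparts
  calc ⟪P β, W β⟫ + c0 * W0 β
      = (∫ s in α..β, (⟪a s, W s⟫ + ⟪P s, b s⟫)) + ∫ s in α..β, c0 * c s := by
        rw [hparts, intervalIntegral.integral_const_mul, hW0 β hβ]
    _ = (∫ s in α..β, (h s - c0 * c s)) + ∫ s in α..β, c0 * c s := by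
        simp_rw [← hpt, add_sub_cancel_right]
    _ = ∫ s in α..β, h s := by
        rw [intervalIntegral.integral_sub hh (hc.const_mul c0), sub_add_cancel]

end PrimitivePairing

theorem variation_pairing_eq_sum_averaged_gradient
    {E F : Type*} [NormedAddCommGroup E] [InnerProductSpace ℝ E] [CompleteSpace E]
    [NormedAddCommGroup F] [InnerProductSpace ℝ F] [CompleteSpace F]
    {f : E → F → ℝ → E} {L : E → F → ℝ → ℝ}
    (hf : Differentiable ℝ fun q : E × F × ℝ => f q.1 q.2.1 q.2.2)
    (hL : Differentiable ℝ fun q : E × F × ℝ => L q.1 q.2.1 q.2.2)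
    {T : ℝ} {N : ℕ} {t : ℕ → ℝ} (ht0 : t 0 = 0) (htN : t N = T) (ht : MonotoneOn t (Iic N))
    {x p W : ℝ → E} {u v : ℝ → F} {p0 : ℝ} {W0 : ℝ → ℝ}
    (hu : IsPiecewiseConstOn t N u) (hv : IsPiecewiseConstOn t N v)
    (hpint : IntegrableOn (fun s =>
      -(gradient (fun y => ⟪p s, f y (u s) s⟫) (x s))
        - p0 • gradient (fun y => L y (u s) s) (x s)) (Icc 0 T))
    (hpode : ∀ τ ∈ Icc (0:ℝ) T, p τ = p 0 + ∫ s in (0:ℝ)..τ,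
      (-(gradient (fun y => ⟪p s, f y (u s) s⟫) (x s))
        - p0 • gradient (fun y => L y (u s) s) (x s)))
    (hHint : IntegrableOn (fun s =>
      gradient (fun ψ => ⟪p s, f (x s) ψ s⟫ + p0 * L (x s) ψ s) (u s)) (Icc 0 T))
    (hwint : IntegrableOn (fun s =>
      (fderiv ℝ (fun y => f y (u s) s) (x s)) (W s)
        + (fderiv ℝ (fun ω => f (x s) ω s) (u s)) (v s - u s)) (Icc 0 T))
    (hw : ∀ τ ∈ Icc (0:ℝ) T, W τ = ∫ s in (0:ℝ)..τ,
      ((fderiv ℝ (fun y => f y (u s) s) (x s)) (W s)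
        + (fderiv ℝ (fun ω => f (x s) ω s) (u s)) (v s - u s)))
    (hw0int : IntegrableOn (fun s =>
      ⟪gradient (fun y => L y (u s) s) (x s), W s⟫
        + ⟪gradient (fun ω => L (x s) ω s) (u s), v s - u s⟫) (Icc 0 T))
    (hw0 : ∀ τ ∈ Icc (0:ℝ) T, W0 τ = ∫ s in (0:ℝ)..τ,
      (⟪gradient (fun y => L y (u s) s) (x s), W s⟫
        + ⟪gradient (fun ω => L (x s) ω s) (u s), v s - u s⟫)) :
    ⟪p T, W T⟫ + p0 * W0 T = ∑ i ∈ Finset.range N,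
      ⟪∫ s in (t i)..(t (i + 1)),
        gradient (fun ψ => ⟪p s, f (x s) ψ s⟫ + p0 * L (x s) ψ s) (u (t i)),
        v (t i) - u (t i)⟫ := by
  have htIcc (i : ℕ) (hi : i ≤ N) : t i ∈ Icc 0 T := ht0 ▸ htN ▸ mem_Icc_of_monotoneOn ht hi
  have hT : 0 ≤ T := (htIcc N le_rfl).1.trans (htIcc N le_rfl).2
  have hle (i : ℕ) (hi : i < N) : t i ≤ t (i + 1) :=
    ht (mem_Iic.2 hi.le) (mem_Iic.2 hi) (Nat.le_succ i)
  have hconst (i : ℕ) (hi : i < N) (s : ℝ) (hs : s ∈ uIoo (t i) (t (i + 1))) :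
      u s = u (t i) ∧ v s = v (t i) := by
    rw [uIoo_of_le (hle i hi)] at hs
    exact ⟨hu i hi s (Ioo_subset_Ico_self hs), hv i hi s (Ioo_subset_Ico_self hs)⟩
  have hk (i : ℕ) (hi : i < N) : IntervalIntegrable (fun s =>
      gradient (fun ψ => ⟪p s, f (x s) ψ s⟫ + p0 * L (x s) ψ s) (u (t i))) volume
      (t i) (t (i + 1)) := by
    refine ((intervalIntegrable_iff_integrableOn_Icc_of_le (hle i hi)).2
      (hHint.mono_set (Icc_subset_Icc (htIcc i hi.le).1 (htIcc (i + 1) hi).2))).congr_uIoo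
      fun s hs => ?_
    simp only [(hconst i hi s hs).1]
  have hH (i : ℕ) (hi : i < N) : EqOn
      (fun s => ⟪gradient (fun ψ => ⟪p s, f (x s) ψ s⟫ + p0 * L (x s) ψ s) (u s), v s - u s⟫)
      (fun s => ⟪gradient (fun ψ => ⟪p s, f (x s) ψ s⟫ + p0 * L (x s) ψ s) (u (t i)),
        v (t i) - u (t i)⟫) (uIoo (t i) (t (i + 1))) := fun s hs => by
    simp only [(hconst i hi s hs).1, (hconst i hi s hs).2]
  have hHi (i : ℕ) (hi : i < N) := ((hk i hi).inner_const _).congr_uIoo (hH i hi).symm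
  rw [← uIcc_of_le hT] at hpint hwint hw0int
  calc ⟪p T, W T⟫ + p0 * W0 T
      = ∫ s in (0:ℝ)..T,
          ⟪gradient (fun ψ => ⟪p s, f (x s) ψ s⟫ + p0 * L (x s) ψ s) (u s), v s - u s⟫ :=
        inner_add_mul_eq_integral_of_primitive hT hpint.intervalIntegrable
          hwint.intervalIntegrable hw0int.intervalIntegrable
          (ht0 ▸ htN ▸ IntervalIntegrable.trans_iterate hHi) hpode hw hw0 fun s =>
          hamiltonian_pairing_identity p0 (hf.differentiableAt_partial_fst _ _ _)
            (hf.differentiableAt_partial_snd _ _ _) (hL.differentiableAt_partial_snd _ _ _)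
    _ = ∑ i ∈ Finset.range N, ∫ s in (t i)..(t (i + 1)),
          ⟪gradient (fun ψ => ⟪p s, f (x s) ψ s⟫ + p0 * L (x s) ψ s) (u s), v s - u s⟫ := by
        rw [intervalIntegral.sum_integral_adjacent_intervals hHi, ht0, htN]
    _ = _ := Finset.sum_congr rfl fun i hi =>
        (intervalIntegral.integral_congr_uIoo (hH i (Finset.mem_range.1 hi))).trans
          (intervalIntegral.integral_inner_const (hk i (Finset.mem_range.1 hi)) _)

theorem stmt_11_general (T : ℝ) (n m : ℕ)
    (U : Set (EuclideanSpace ℝ (Fin m)))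
    (f : EuclideanSpace ℝ (Fin n) → EuclideanSpace ℝ (Fin m) → ℝ → EuclideanSpace ℝ (Fin n))
    (L : EuclideanSpace ℝ (Fin n) → EuclideanSpace ℝ (Fin m) → ℝ → ℝ)
    (hf : ContDiff ℝ 2 (fun q : EuclideanSpace ℝ (Fin n) × EuclideanSpace ℝ (Fin m) × ℝ =>
      f q.1 q.2.1 q.2.2))
    (hL : ContDiff ℝ 2 (fun q : EuclideanSpace ℝ (Fin n) × EuclideanSpace ℝ (Fin m) × ℝ =>
      L q.1 q.2.1 q.2.2))
    -- the partition 𝕋 = {t_i}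
    (N : ℕ) (t : ℕ → ℝ) (ht0 : t 0 = 0) (htN : t N = T)
    (htmono : ∀ i < N, t i < t (i + 1))
    -- the class PC^𝕋_U of piecewise constant controls with values in U
    (PCU : (ℝ → EuclideanSpace ℝ (Fin m)) → Prop)
    (hPCU : ∀ v, PCU v ↔
      ((∀ i < N, ∀ s ∈ Ico (t i) (t (i + 1)), v s = v (t i)) ∧
       ∀ s ∈ Icc (0:ℝ) T, v s ∈ U))
    -- the admissible pair (x,u) with u piecewise constant
    (x : ℝ → EuclideanSpace ℝ (Fin n)) (u : ℝ → EuclideanSpace ℝ (Fin m))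
    (hu : PCU u)
    -- the nontrivial pair (p,p⁰) satisfying the adjoint equation
    (p : ℝ → EuclideanSpace ℝ (Fin n)) (p0 : ℝ)
    (hpint : IntegrableOn (fun s =>
      -(gradient (fun y => ⟪p s, f y (u s) s⟫) (x s))
        - p0 • gradient (fun y => L y (u s) s) (x s)) (Icc 0 T))
    (hpode : ∀ τ ∈ Icc (0:ℝ) T, p τ = p 0 + ∫ s in (0:ℝ)..τ,
      (-(gradient (fun y => ⟪p s, f y (u s) s⟫) (x s))
        - p0 • gradient (fun y => L y (u s) s) (x s)))
    -- integrability of the Hamiltonian u-gradient along the extremal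
    (hHint : IntegrableOn (fun s =>
      gradient (fun ψ => ⟪p s, f (x s) ψ s⟫ + p0 * L (x s) ψ s) (u s)) (Icc 0 T))
    -- the variation vectors w(·,u,v−u) and w⁰(·,u,v−u)
    (w : (ℝ → EuclideanSpace ℝ (Fin m)) → ℝ → EuclideanSpace ℝ (Fin n))
    (w0 : (ℝ → EuclideanSpace ℝ (Fin m)) → ℝ → ℝ)
    (hwint : ∀ v, PCU v → IntegrableOn (fun s =>
      (fderiv ℝ (fun y => f y (u s) s) (x s)) (w v s)
        + (fderiv ℝ (fun ω => f (x s) ω s) (u s)) (v s - u s)) (Icc 0 T))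
    (hw : ∀ v, PCU v → ∀ τ ∈ Icc (0:ℝ) T, w v τ = ∫ s in (0:ℝ)..τ,
      ((fderiv ℝ (fun y => f y (u s) s) (x s)) (w v s)
        + (fderiv ℝ (fun ω => f (x s) ω s) (u s)) (v s - u s)))
    (hw0int : ∀ v, PCU v → IntegrableOn (fun s =>
      ⟪gradient (fun y => L y (u s) s) (x s), w v s⟫
        + ⟪gradient (fun ω => L (x s) ω s) (u s), v s - u s⟫) (Icc 0 T))
    (hw0 : ∀ v, PCU v → ∀ τ ∈ Icc (0:ℝ) T, w0 v τ = ∫ s in (0:ℝ)..τ,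
      (⟪gradient (fun y => L y (u s) s) (x s), w v s⟫
        + ⟪gradient (fun ω => L (x s) ω s) (u s), v s - u s⟫)) :
    -- averaged Hamiltonian gradient condition ⟺ variational inequality
    ((∀ i < N, ∀ ω ∈ U,
        ⟪∫ s in (t i)..(t (i + 1)),
          gradient (fun ψ => ⟪p s, f (x s) ψ s⟫ + p0 * L (x s) ψ s) (u (t i)),
          ω - u (t i)⟫ ≤ 0)
      ↔ (∀ v, PCU v → ⟪p T, w v T⟫ + p0 * w0 v T ≤ 0)) := by
  have ht : StrictMonoOn t (Iic N) :=
    strictMonoOn_Iic_of_lt_succ fun i hi => by simpa using htmono i hi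
  have htIcc (i : ℕ) (hi : i < N) : t i ∈ Icc 0 T :=
    ht0 ▸ htN ▸ mem_Icc_of_monotoneOn ht.monotoneOn hi.le
  obtain ⟨hupc, huU⟩ := (hPCU u).1 hu
  have hkey {v} (hv : PCU v) := variation_pairing_eq_sum_averaged_gradient
    (hf.differentiable two_ne_zero) (hL.differentiable two_ne_zero) ht0 htN ht.monotoneOn
    hupc ((hPCU v).1 hv).1 hpint hpode hHint (hwint v hv) (hw v hv)
    (hw0int v hv) (hw0 v hv)
  refine ⟨fun hgrad v hv => ?_, fun hineq i hi ω hω => ?_⟩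
  · rw [hkey hv]
    exact Finset.sum_nonpos fun i hi => hgrad i (Finset.mem_range.1 hi) _
      (((hPCU v).1 hv).2 _ (htIcc i (Finset.mem_range.1 hi)))
  set v := (Ico (t i) (t (i + 1))).piecewise (fun _ => ω) u
  have hvω (s : ℝ) (hs : s ∈ Ico (t i) (t (i + 1))) : v s = ω := piecewise_eq_of_mem _ _ _ hs
  have hvu (s : ℝ) (hs : s ∉ Ico (t i) (t (i + 1))) : v s = u s :=
    piecewise_eq_of_notMem _ _ _ hs
  have hv : PCU v := (hPCU v).2 ⟨IsPiecewiseConstOn.piecewise_Ico hupc ht.monotoneOn hi ω,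
    piecewise_mem_pi _ (fun _ _ => hω) huU⟩
  have htj (j : ℕ) (hj : j < N) : t j ∈ Ico (t j) (t (j + 1)) := ⟨le_rfl, htmono j hj⟩
  have hsum := hineq v hv
  rwa [hkey hv, Finset.sum_eq_single_of_mem i (Finset.mem_range.2 hi) fun j hj hji => by
      rw [hvu _ (by rwa [mem_Ico_iff_eq_of_monotoneOn ht.monotoneOn hi (Finset.mem_range.1 hj)
          (htj j (Finset.mem_range.1 hj))]), sub_self, inner_zero_right],
    hvω _ (htj i hi)] at hsum

/-- Characterization of 𝕋-averaged weak extremal lifts (sampled-data case): the averaged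
Hamiltonian gradient condition `∫_{t_i}^{t_{i+1}} ∇_u H ds ∈ N_U[u_i]` for all `i` holds
if and only if `⟨p(T), w(T,u,v−u)⟩ + p⁰ w⁰(T,u,v−u) ≤ 0` for every piecewise constant
`v ∈ PC^𝕋` with values in `U`. -/
theorem stmt_11 (T : ℝ) (hT : 0 < T) (n m : ℕ) (hn : 0 < n) (hm : 0 < m)
    (x0 xT : EuclideanSpace ℝ (Fin n))
    (U : Set (EuclideanSpace ℝ (Fin m))) (hUne : U.Nonempty)
    (hUclosed : IsClosed U) (hUconvex : Convex ℝ U)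
    (f : EuclideanSpace ℝ (Fin n) → EuclideanSpace ℝ (Fin m) → ℝ → EuclideanSpace ℝ (Fin n))
    (L : EuclideanSpace ℝ (Fin n) → EuclideanSpace ℝ (Fin m) → ℝ → ℝ)
    (hf : ContDiff ℝ 2 (fun q : EuclideanSpace ℝ (Fin n) × EuclideanSpace ℝ (Fin m) × ℝ =>
      f q.1 q.2.1 q.2.2))
    (hL : ContDiff ℝ 2 (fun q : EuclideanSpace ℝ (Fin n) × EuclideanSpace ℝ (Fin m) × ℝ =>
      L q.1 q.2.1 q.2.2))
    -- the partition 𝕋 = {t_i}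
    (N : ℕ) (hN : 0 < N) (t : ℕ → ℝ) (ht0 : t 0 = 0) (htN : t N = T)
    (htmono : ∀ i < N, t i < t (i + 1))
    -- the class PC^𝕋_U of piecewise constant controls with values in U
    (PCU : (ℝ → EuclideanSpace ℝ (Fin m)) → Prop)
    (hPCU : ∀ v, PCU v ↔
      ((∀ i < N, ∀ s ∈ Ico (t i) (t (i + 1)), v s = v (t i)) ∧
       ∀ s ∈ Icc (0:ℝ) T, v s ∈ U))
    -- the admissible pair (x,u) with u piecewise constant
    (x : ℝ → EuclideanSpace ℝ (Fin n)) (u : ℝ → EuclideanSpace ℝ (Fin m))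
    (hu : PCU u)
    (hubdd : ∃ Mu, ∀ᵐ s ∂(volume.restrict (Icc (0:ℝ) T)), ‖u s‖ ≤ Mu)
    (hxint : IntegrableOn (fun s => f (x s) (u s) s) (Icc 0 T))
    (hxode : ∀ τ ∈ Icc (0:ℝ) T, x τ = x0 + ∫ s in (0:ℝ)..τ, f (x s) (u s) s)
    (hxT : x T = xT)
    -- the nontrivial pair (p,p⁰) satisfying the adjoint equation
    (p : ℝ → EuclideanSpace ℝ (Fin n)) (p0 : ℝ) (hp0 : p0 ≤ 0)
    (hnontriv : ¬ (p0 = 0 ∧ ∀ τ ∈ Icc (0:ℝ) T, p τ = 0))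
    (hpint : IntegrableOn (fun s =>
      -(gradient (fun y => ⟪p s, f y (u s) s⟫) (x s))
        - p0 • gradient (fun y => L y (u s) s) (x s)) (Icc 0 T))
    (hpode : ∀ τ ∈ Icc (0:ℝ) T, p τ = p 0 + ∫ s in (0:ℝ)..τ,
      (-(gradient (fun y => ⟪p s, f y (u s) s⟫) (x s))
        - p0 • gradient (fun y => L y (u s) s) (x s)))
    -- integrability of the Hamiltonian u-gradient along the extremal
    (hHint : IntegrableOn (fun s =>
      gradient (fun ψ => ⟪p s, f (x s) ψ s⟫ + p0 * L (x s) ψ s) (u s)) (Icc 0 T))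
    -- the variation vectors w(·,u,v−u) and w⁰(·,u,v−u)
    (w : (ℝ → EuclideanSpace ℝ (Fin m)) → ℝ → EuclideanSpace ℝ (Fin n))
    (w0 : (ℝ → EuclideanSpace ℝ (Fin m)) → ℝ → ℝ)
    (hwint : ∀ v, PCU v → IntegrableOn (fun s =>
      (fderiv ℝ (fun y => f y (u s) s) (x s)) (w v s)
        + (fderiv ℝ (fun ω => f (x s) ω s) (u s)) (v s - u s)) (Icc 0 T))
    (hw : ∀ v, PCU v → ∀ τ ∈ Icc (0:ℝ) T, w v τ = ∫ s in (0:ℝ)..τ,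
      ((fderiv ℝ (fun y => f y (u s) s) (x s)) (w v s)
        + (fderiv ℝ (fun ω => f (x s) ω s) (u s)) (v s - u s)))
    (hw0int : ∀ v, PCU v → IntegrableOn (fun s =>
      ⟪gradient (fun y => L y (u s) s) (x s), w v s⟫
        + ⟪gradient (fun ω => L (x s) ω s) (u s), v s - u s⟫) (Icc 0 T))
    (hw0 : ∀ v, PCU v → ∀ τ ∈ Icc (0:ℝ) T, w0 v τ = ∫ s in (0:ℝ)..τ,
      (⟪gradient (fun y => L y (u s) s) (x s), w v s⟫
        + ⟪gradient (fun ω => L (x s) ω s) (u s), v s - u s⟫)) :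
    -- averaged Hamiltonian gradient condition ⟺ variational inequality
    ((∀ i < N, ∀ ω ∈ U,
        ⟪∫ s in (t i)..(t (i + 1)),
          gradient (fun ψ => ⟪p s, f (x s) ψ s⟫ + p0 * L (x s) ψ s) (u (t i)),
          ω - u (t i)⟫ ≤ 0)
      ↔ (∀ v, PCU v → ⟪p T, w v T⟫ + p0 * w0 v T ≤ 0)) :=
  stmt_11_general T n m U f L hf hL N t ht0 htN htmono PCU hPCU x u hu p p0 hpint hpode hHint w w0
    hwint hw hw0int hw0
end

section
/- Let φ ∈ L^∞([0,T],ℝ^m) and let U ⊆ ℝ^m be closed convex. If ∫_0^T ⟨φ(s), v(s) − u(s)⟩ ds ≤ 0 for every v ∈ L^∞([0,T],U), where u ∈ L^∞([0,T],U) is fixed, then for almost every t ∈ [0,T] one has ⟨φ(t), ω − u(t)⟩ ≤ 0 for every ω ∈ U, i.e., φ(t) ∈ N_U[u(t)] a.e. -/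
open MeasureTheory Set Filter Topology
open scoped RealInnerProductSpace

/-- Needle-like perturbation lemma: if `∫₀ᵀ ⟨φ(s), v(s) − u(s)⟩ ds ≤ 0` for every
`v ∈ L^∞([0,T],U)`, then `φ(t) ∈ N_U[u(t)]` for a.e. `t`, i.e.
`⟨φ(t), ω − u(t)⟩ ≤ 0` for every `ω ∈ U`, a.e. -/
theorem stmt_13 (T : ℝ) (hT : 0 < T) (m : ℕ) (hm : 0 < m)
    (U : Set (EuclideanSpace ℝ (Fin m))) (hUne : U.Nonempty)
    (hUclosed : IsClosed U) (hUconvex : Convex ℝ U)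
    (φ : ℝ → EuclideanSpace ℝ (Fin m))
    (hφmeas : AEStronglyMeasurable φ (volume.restrict (Icc 0 T)))
    (hφbdd : ∃ M, ∀ᵐ s ∂(volume.restrict (Icc (0:ℝ) T)), ‖φ s‖ ≤ M)
    (u : ℝ → EuclideanSpace ℝ (Fin m))
    (humeas : AEStronglyMeasurable u (volume.restrict (Icc 0 T)))
    (huU : ∀ᵐ s ∂(volume.restrict (Icc (0:ℝ) T)), u s ∈ U)
    (hubdd : ∃ M, ∀ᵐ s ∂(volume.restrict (Icc (0:ℝ) T)), ‖u s‖ ≤ M)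
    (hineq : ∀ v : ℝ → EuclideanSpace ℝ (Fin m),
      AEStronglyMeasurable v (volume.restrict (Icc 0 T)) →
      (∀ᵐ s ∂(volume.restrict (Icc (0:ℝ) T)), v s ∈ U) →
      (∃ M, ∀ᵐ s ∂(volume.restrict (Icc (0:ℝ) T)), ‖v s‖ ≤ M) →
      (∫ s in (0:ℝ)..T, ⟪φ s, v s - u s⟫) ≤ 0) :
    ∀ᵐ t ∂(volume.restrict (Icc (0:ℝ) T)), ∀ ω ∈ U, ⟪φ t, ω - u t⟫ ≤ 0 := by
  classical
  set μ : Measure ℝ := volume.restrict (Icc (0:ℝ) T) with hμ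
  obtain ⟨Mφ, hMφ⟩ := hφbdd
  obtain ⟨Mu, hMu⟩ := hubdd
  have hμfin : IsFiniteMeasure μ := by
    constructor
    rw [hμ, Measure.restrict_apply_univ]
    exact (Real.volume_Icc (a := 0) (b := T) ▸ ENNReal.ofReal_lt_top)
  -- Step 1: for each fixed ω ∈ U, a.e. t, ⟪φ t, ω - u t⟫ ≤ 0
  have key : ∀ ω ∈ U, ∀ᵐ t ∂μ, ⟪φ t, ω - u t⟫ ≤ 0 := by
    intro ω hω
    set f : ℝ → ℝ := fun t => ⟪φ t, ω - u t⟫ with hf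
    have hfmeas : AEStronglyMeasurable f μ :=
      AEStronglyMeasurable.inner hφmeas (aestronglyMeasurable_const.sub humeas)
    have hfint : Integrable f μ := by
      refine Integrable.mono' (integrable_const (|Mφ| * (‖ω‖ + |Mu|))) hfmeas ?_
      filter_upwards [hMφ, hMu] with t h1 h2
      calc ‖f t‖ ≤ ‖φ t‖ * ‖ω - u t‖ := norm_inner_le_norm _ _
        _ ≤ |Mφ| * (‖ω‖ + |Mu|) := by
            apply mul_le_mul (h1.trans (le_abs_self _)) ?_ (norm_nonneg _) (abs_nonneg _)
            exact (norm_sub_le _ _).trans (by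
              gcongr
              exact h2.trans (le_abs_self _))
    -- for every measurable set s, ∫ t in s, f t ∂μ ≤ 0
    have hset : ∀ s : Set ℝ, MeasurableSet s → μ s < ⊤ → 0 ≤ ∫ t in s, (-f) t ∂μ := by
      intro s hs _
      simp only [Pi.neg_apply, integral_neg, Left.nonneg_neg_iff]
      -- the needle perturbation
      set v : ℝ → EuclideanSpace ℝ (Fin m) := s.piecewise (fun _ => ω) u with hv
      have hvmeas : AEStronglyMeasurable v μ :=
        AEStronglyMeasurable.piecewise hs
          (aestronglyMeasurable_const) (humeas.restrict)
      have hvU : ∀ᵐ t ∂μ, v t ∈ U := by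
        filter_upwards [huU] with t ht
        by_cases h : t ∈ s
        · simpa [hv, Set.piecewise_eq_of_mem _ _ _ h] using hω
        · simpa [hv, Set.piecewise_eq_of_notMem _ _ _ h] using ht
      have hvbdd : ∃ M, ∀ᵐ t ∂μ, ‖v t‖ ≤ M := by
        refine ⟨max ‖ω‖ Mu, ?_⟩
        filter_upwards [hMu] with t ht
        by_cases h : t ∈ s
        · simp [hv, Set.piecewise_eq_of_mem _ _ _ h, le_max_left]
        · simp only [hv, Set.piecewise_eq_of_notMem _ _ _ h]
          exact ht.trans (le_max_right _ _)
      have h0 := hineq v hvmeas hvU hvbdd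
      -- rewrite the interval integral as a set integral
      have hpt : ∀ t, ⟪φ t, v t - u t⟫ = s.indicator f t := by
        intro t
        by_cases h : t ∈ s
        · simp [hv, Set.piecewise_eq_of_mem _ _ _ h, Set.indicator_of_mem h, hf]
        · simp [hv, Set.piecewise_eq_of_notMem _ _ _ h, Set.indicator_of_notMem h]
      have heq : (∫ t in (0:ℝ)..T, ⟪φ t, v t - u t⟫) = ∫ t in s, f t ∂μ := by
        rw [intervalIntegral.integral_of_le hT.le]
        simp_rw [hpt]
        rw [integral_indicator hs, hμ, Measure.restrict_restrict hs,
          Measure.restrict_restrict hs]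
        exact setIntegral_congr_set (ae_eq_set_inter (EventuallyEq.refl _ _) Ioc_ae_eq_Icc)
      rwa [heq] at h0
    have hneg : 0 ≤ᵐ[μ] (-f) :=
      ae_nonneg_of_forall_setIntegral_nonneg hfint.neg hset
    filter_upwards [hneg] with t ht
    simpa [hf] using neg_nonneg.mp (by simpa using ht)
  -- Step 2: countable dense subset of U
  obtain ⟨D, hDU, hDcount, hDdense⟩ :=
    (TopologicalSpace.IsSeparable.of_separableSpace U).exists_countable_dense_subset
  have hD : ∀ᵐ t ∂μ, ∀ d ∈ D, ⟪φ t, d - u t⟫ ≤ 0 :=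
    (ae_ball_iff hDcount).2 fun d hd => key d (hDU hd)
  filter_upwards [hD] with t ht ω hω
  have hclosed : IsClosed {x : EuclideanSpace ℝ (Fin m) | ⟪φ t, x - u t⟫ ≤ 0} :=
    isClosed_le (Continuous.inner continuous_const (continuous_id.sub continuous_const))
      continuous_const
  have : U ⊆ {x | ⟪φ t, x - u t⟫ ≤ 0} :=
    hDdense.trans (hclosed.closure_subset_iff.mpr fun d hd => ht d hd)
  exact this hω
end
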